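/- arXiv:2309.06291 — 4 statements merged into one kernel-verified Lean document; each statement's English description precedes it below -/
import Mathlib

section
/- H^{s−1}-accretivity estimate: Let s > 3/2. There exists a constant C > 0, depending only on s, such that for every real-valued u ∈ H^s(𝕊) and every w ∈ H^s(𝕊), the estimate |(u·∂ₓw, w)_{s−1}| ≤ C ‖u‖_s ‖w‖²_{s−1} holds, where (·,·)_{s−1} is the H^{s−1}(𝕊) inner product. -/
noncomputable section

open MeasureTheory

/-- `k`-th Fourier coefficient (period 1) of a real-valued function. -/
def fc (f : ℝ → ℝ) (k : ℤ) : ℂ :=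
  ∫ x in (0:ℝ)..1, (f x : ℂ) * Complex.exp (-(((2 * Real.pi : ℝ) : ℂ) * Complex.I * (k : ℂ) * (x : ℂ)))

/-- Membership in the periodic Sobolev space `H^s(𝕊)` (period 1). -/
def InHs (s : ℝ) (f : ℝ → ℝ) : Prop :=
  Function.Periodic f 1 ∧ IntervalIntegrable f volume 0 1 ∧
    Summable (fun k : ℤ => ((1 : ℝ) + (k : ℝ) ^ 2) ^ s * ‖fc f k‖ ^ 2)

/-- The `H^s(𝕊)` norm. -/
def HsNorm (s : ℝ) (f : ℝ → ℝ) : ℝ :=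
  Real.sqrt (∑' k : ℤ, ((1 : ℝ) + (k : ℝ) ^ 2) ^ s * ‖fc f k‖ ^ 2)

/-- The `H^s(𝕊)` inner product (real-valued, for real functions). -/
def HsInner (s : ℝ) (f g : ℝ → ℝ) : ℝ :=
  ∑' k : ℤ, ((1 : ℝ) + (k : ℝ) ^ 2) ^ s * (fc f k * (starRingEnd ℂ) (fc g k)).re

/-- Fourier multiplier operator with symbol `m`. -/
def FM (m : ℤ → ℂ) (f : ℝ → ℝ) : ℝ → ℝ := fun x =>
  (∑' k : ℤ, m k * fc f k * Complex.exp (((2 * Real.pi : ℝ) : ℂ) * Complex.I * (k : ℂ) * (x : ℂ))).re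

/-- `Λ^r`, the Fourier multiplier with symbol `(1+|k|²)^{r/2}`. -/
def Lam (r : ℝ) : (ℝ → ℝ) → (ℝ → ℝ) :=
  FM (fun k => ((((1 : ℝ) + (k : ℝ) ^ 2) ^ (r / 2) : ℝ) : ℂ))

/-- `∂ₓ`, the Fourier multiplier with symbol `2πik` (period 1). -/
def Dx : (ℝ → ℝ) → (ℝ → ℝ) :=
  FM (fun k => ((2 * Real.pi : ℝ) : ℂ) * Complex.I * (k : ℂ))

/-- `∂ₓ Λ^{-2}`, the Fourier multiplier with symbol `2πik (1+|k|²)^{-1}`. -/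
def DxLamInv2 : (ℝ → ℝ) → (ℝ → ℝ) :=
  FM (fun k => ((2 * Real.pi : ℝ) : ℂ) * Complex.I * (k : ℂ) * (((1 : ℝ) + (k : ℝ) ^ 2 : ℝ) : ℂ)⁻¹)

/-- Right-hand side `2u∂ₓu + ∂ₓΛ^{-2}(u² + ∂ₓ(u²))` of the nonlocal Novikov equation. -/
def NovRHS (f : ℝ → ℝ) : ℝ → ℝ := fun x =>
  2 * f x * Dx f x + DxLamInv2 (fun y => f y ^ 2 + Dx (fun z => f z ^ 2) y) x

/-- Continuity of `t ↦ u t` on `S` with values in `H^r(𝕊)`. -/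
def HsContOn (r : ℝ) (u : ℝ → ℝ → ℝ) (S : Set ℝ) : Prop :=
  ∀ t ∈ S, ∀ ε > (0:ℝ), ∃ δ > (0:ℝ), ∀ t' ∈ S, |t' - t| < δ →
    HsNorm r (fun x => u t' x - u t x) < ε

/-- `v` is the `H^r(𝕊)`-valued derivative of `t ↦ u t` at `t` within `S`. -/
def HsDerivWithin (r : ℝ) (u : ℝ → ℝ → ℝ) (v : ℝ → ℝ) (t : ℝ) (S : Set ℝ) : Prop :=
  ∀ ε > (0:ℝ), ∃ δ > (0:ℝ), ∀ t' ∈ S, t' ≠ t → |t' - t| < δ →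
    HsNorm r (fun x => (u t' x - u t x) / (t' - t) - v x) < ε

/-- `u` is a solution of the periodic Cauchy problem for the nonlocal Novikov equation
on the time set `S`, with initial datum `u₀`, in the class `C⁰(S,H^s) ∩ C¹(S,H^{s-1})`. -/
def IsNovSolutionOn (s : ℝ) (S : Set ℝ) (u₀ : ℝ → ℝ) (u : ℝ → ℝ → ℝ) : Prop :=
  u 0 = u₀ ∧
  (∀ t ∈ S, InHs s (u t)) ∧
  HsContOn s u S ∧
  ∃ v : ℝ → ℝ → ℝ,
    (∀ t ∈ S, InHs (s - 1) (v t)) ∧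
    HsContOn (s - 1) v S ∧
    (∀ t ∈ S, HsDerivWithin (s - 1) u (v t) t S) ∧
    (∀ t ∈ S, ∀ k : ℤ, fc (v t) k = fc (NovRHS (u t)) k)

end


set_option maxHeartbeats 1600000
noncomputable section AccHelpers
open MeasureTheory

namespace Acc

/-- character -/
def ee (k : ℤ) (x : ℝ) : ℂ :=
  Complex.exp (((2 * Real.pi : ℝ) : ℂ) * Complex.I * (k : ℂ) * (x : ℂ))

lemma ee_eq (k : ℤ) (x : ℝ) : ee k x = Complex.exp (((2 * Real.pi * k * x : ℝ) : ℂ) * Complex.I) := by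
  unfold ee; congr 1; push_cast; ring

@[simp] lemma ee_norm (k : ℤ) (x : ℝ) : ‖ee k x‖ = 1 := by
  rw [ee_eq, Complex.norm_exp]; simp

@[simp] lemma ee_conj (k : ℤ) (x : ℝ) : (starRingEnd ℂ) (ee k x) = ee (-k) x := by
  rw [ee_eq, ee_eq, ← Complex.exp_conj, map_mul, Complex.conj_I, Complex.conj_ofReal]
  congr 1; push_cast; ring

lemma ee_neg (k : ℤ) (x : ℝ) :
    Complex.exp (-(((2 * Real.pi : ℝ) : ℂ) * Complex.I * (k : ℂ) * (x : ℂ))) = ee (-k) x := by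
  unfold ee; congr 1; push_cast; ring

lemma fc_eq (f : ℝ → ℝ) (k : ℤ) : fc f k = ∫ x in (0:ℝ)..1, (f x : ℂ) * ee (-k) x := by
  unfold fc; congr 1; ext x; rw [ee_neg]

lemma fc_neg (f : ℝ → ℝ) (k : ℤ) : fc f (-k) = (starRingEnd ℂ) (fc f k) := by
  rw [fc_eq, fc_eq, intervalIntegral.integral_of_le (by norm_num), intervalIntegral.integral_of_le (by norm_num),
    ← integral_conj]
  congr 1; ext x
  rw [map_mul, ee_conj, Complex.conj_ofReal, neg_neg]

lemma FM_eq (m : ℤ → ℂ) (f : ℝ → ℝ) (x : ℝ) :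
    FM m f x = (∑' k : ℤ, m k * fc f k * ee k x).re := rfl

end Acc

namespace Acc

lemma ee_add (j j' : ℤ) (x : ℝ) : ee (j + j') x = ee j x * ee j' x := by
  unfold ee; rw [← Complex.exp_add]; congr 1; push_cast; ring

lemma ee_continuous (j : ℤ) : Continuous (ee j) := by
  unfold ee
  exact Complex.continuous_exp.comp (by continuity)

lemma integral_conv {u : ℝ → ℝ} (hu : IntervalIntegrable u volume 0 1)
    {c : ℤ → ℂ} (hc : Summable fun j => ‖c j‖) (k : ℤ) :
    ∫ x in (0:ℝ)..1, (u x : ℂ) * (∑' j : ℤ, c j * ee j x) * ee (-k) x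
      = ∑' j : ℤ, c j * fc u (k - j) := by
  have le01 : (0:ℝ) ≤ 1 := by norm_num
  have huI : IntegrableOn (fun x => ((u x : ℝ) : ℂ)) (Set.Ioc 0 1) volume :=
    ((intervalIntegrable_iff_integrableOn_Ioc_of_le le01).1 hu).ofReal
  set μ := volume.restrict (Set.Ioc (0:ℝ) 1) with hμ
  set Fj : ℤ → ℝ → ℂ := fun j x => c j * ((u x : ℂ) * ee (j - k) x) with hFj
  have hFj_int : ∀ j, Integrable (Fj j) μ := by
    intro j
    apply Integrable.const_mul
    have h1 : Integrable (fun x => ee (j - k) x * (u x : ℂ)) μ :=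
      Integrable.bdd_mul huI ((ee_continuous (j - k)).aestronglyMeasurable)
        (c := 1) (ae_of_all _ fun x => le_of_eq (ee_norm _ _))
    exact h1.congr (Filter.EventuallyEq.of_eq (funext fun x => mul_comm _ _))
  have hFj_norm : ∀ j, (∫ x, ‖Fj j x‖ ∂μ) = ‖c j‖ * ∫ x, |u x| ∂μ := by
    intro j
    rw [← integral_const_mul]
    congr 1
    ext x
    rw [hFj]
    simp only [norm_mul, ee_norm, mul_one, Complex.norm_real, Real.norm_eq_abs]
  have hFj_norm_summable : Summable fun j => ∫ x, ‖Fj j x‖ ∂μ := by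
    apply Summable.congr (hc.mul_right (∫ x, |u x| ∂μ))
    intro j
    rw [hFj_norm j]
  have hints := MeasureTheory.integral_tsum_of_summable_integral_norm hFj_int hFj_norm_summable
  -- identify both sides
  have hL : ∀ j, (∫ x, Fj j x ∂μ) = c j * fc u (k - j) := by
    intro j
    rw [hFj]
    simp only
    rw [integral_const_mul]
    congr 1
    rw [fc_eq, intervalIntegral.integral_of_le le01]
    congr 1
    ext x
    rw [neg_sub]
  have hR : ∀ x, (∑' j : ℤ, Fj j x)
      = (u x : ℂ) * (∑' j : ℤ, c j * ee j x) * ee (-k) x := by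
    intro x
    have h1 : ∀ j : ℤ, Fj j x = ((u x : ℂ) * ee (-k) x) * (c j * ee j x) := by
      intro j
      rw [hFj]
      simp only
      rw [show (j : ℤ) - k = j + -k by ring, ee_add]
      ring
    rw [tsum_congr h1, tsum_mul_left]
    ring
  rw [intervalIntegral.integral_of_le le01]
  calc ∫ x in Set.Ioc (0:ℝ) 1, (u x : ℂ) * (∑' j : ℤ, c j * ee j x) * ee (-k) x
      = ∫ x, (∑' j, Fj j x) ∂μ := by
        rw [hμ]
        congr 1
        ext x
        rw [hR x]
    _ = ∑' j, ∫ x, Fj j x ∂μ := hints.symm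
    _ = ∑' j : ℤ, c j * fc u (k - j) := tsum_congr hL

end Acc


namespace Acc

lemma rpow_sub_one_mul {q θ : ℝ} (hq : 0 < q) : q ^ (θ - 1) * q = q ^ θ := by
  nth_rewrite 2 [← Real.rpow_one q]
  rw [← Real.rpow_add hq]; ring_nf

lemma step1 {θ p q : ℝ} (hθ : 0 < θ) (hp : 1 ≤ p) (hpq : p ≤ q) :
    q ^ θ - p ^ θ ≤ max θ θ⁻¹ * ((q - p) * q ^ (θ - 1)) := by
  have hp0 : 0 < p := lt_of_lt_of_le one_pos hp
  have hq0 : 0 < q := lt_of_lt_of_le hp0 hpq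
  have hqθ1 : 0 < q ^ (θ - 1) := Real.rpow_pos_of_pos hq0 _
  have hmono : p ^ θ ≤ q ^ θ := Real.rpow_le_rpow hp0.le hpq hθ.le
  have hqq : q ^ (θ - 1) * q = q ^ θ := rpow_sub_one_mul hq0
  have hslack : 0 ≤ (q - p) * q ^ (θ - 1) := mul_nonneg (by linarith) hqθ1.le
  rcases le_or_gt θ 1 with h1 | h1
  · -- θ ≤ 1
    have key2 : p * q ^ (θ - 1) ≤ p ^ θ := by
      have h4 : q ^ (θ - 1) ≤ p ^ (θ - 1) :=
        Real.rpow_le_rpow_of_nonpos hp0 hpq (by linarith)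
      calc p * q ^ (θ - 1) ≤ p * p ^ (θ - 1) := by
            exact mul_le_mul_of_nonneg_left h4 hp0.le
        _ = p ^ θ := by rw [mul_comm]; exact rpow_sub_one_mul hp0
    have hkey : θ * (q ^ θ - p ^ θ) ≤ (q - p) * q ^ (θ - 1) := by
      have : θ * (q ^ θ - p ^ θ) ≤ q ^ θ - p ^ θ := by nlinarith
      nlinarith
    have hmax : θ⁻¹ ≤ max θ θ⁻¹ := le_max_right _ _
    have hθi : 0 < θ⁻¹ := inv_pos.2 hθ
    have : q ^ θ - p ^ θ ≤ θ⁻¹ * ((q - p) * q ^ (θ - 1)) := by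
      have h5 := mul_le_mul_of_nonneg_left hkey hθi.le
      rw [← mul_assoc, inv_mul_cancel₀ hθ.ne', one_mul] at h5
      exact h5
    nlinarith
  · -- θ > 1 : Bernoulli
    have hb := one_add_mul_self_le_rpow_one_add (s := p / q - 1) (p := θ)
      (by have : 0 < p / q := div_pos hp0 hq0; linarith) h1.le
    rw [add_sub_cancel] at hb
    have hrpow : (p / q) ^ θ = p ^ θ / q ^ θ := Real.div_rpow hp0.le hq0.le θ
    rw [hrpow] at hb
    have hqθ : 0 < q ^ θ := Real.rpow_pos_of_pos hq0 _
    have hb2 : (1 + θ * (p / q - 1)) * q ^ θ ≤ p ^ θ := by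
      rw [← div_mul_cancel₀ (p ^ θ) hqθ.ne']
      exact mul_le_mul_of_nonneg_right hb hqθ.le
    have hexp : (p / q - 1) * q ^ θ = (p - q) * q ^ (θ - 1) := by
      rw [← hqq]; field_simp
    have : q ^ θ - p ^ θ ≤ θ * ((q - p) * q ^ (θ - 1)) := by nlinarith [hb2, hexp]
    calc q ^ θ - p ^ θ ≤ θ * ((q - p) * q ^ (θ - 1)) := this
      _ ≤ max θ θ⁻¹ * ((q - p) * q ^ (θ - 1)) :=
          mul_le_mul_of_nonneg_right (le_max_left _ _) hslack

end Acc

namespace Acc2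
open Acc

lemma abs_le_rpow_half {x p : ℝ} (hp : 0 ≤ p) (h : x ^ 2 ≤ p) : |x| ≤ p ^ ((1:ℝ)/2) := by
  rw [← Real.sqrt_sq_eq_abs, ← Real.sqrt_eq_rpow]
  exact Real.sqrt_le_sqrt h

lemma rpow_half_mul {p θ : ℝ} (hp : 0 < p) : p ^ (θ/2) * p ^ (θ/2) = p ^ θ := by
  rw [← Real.rpow_add hp]; ring_nf

lemma kernel_aux {θ x y : ℝ} (hθ : 1/2 < θ) (hxy : x ^ 2 ≤ y ^ 2) :
    |x * (1 + y ^ 2) ^ θ - y * (1 + x ^ 2) ^ θ| ≤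
      (2 * max θ θ⁻¹ * 2 ^ θ + 1) * (1 + (y - x) ^ 2) ^ (max 1 θ / 2) *
        ((1 + x ^ 2) * (1 + y ^ 2)) ^ (θ / 2) := by
  have hθ0 : 0 < θ := by linarith
  set p : ℝ := 1 + x ^ 2 with hpdef
  set q : ℝ := 1 + y ^ 2 with hqdef
  set m : ℝ := y - x with hmdef
  set E : ℝ := max θ θ⁻¹ with hEdef
  set γ : ℝ := max 1 θ / 2 with hγdef
  have hE1 : 1 ≤ E := by
    rcases le_or_gt 1 θ with h | h
    · exact le_trans h (le_max_left _ _)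
    · exact le_trans (by rw [le_inv_comm₀ one_pos hθ0]; simpa using h.le) (le_max_right _ _)
  have hp1 : (1:ℝ) ≤ p := by nlinarith [sq_nonneg x]
  have hq1 : (1:ℝ) ≤ q := by nlinarith [sq_nonneg y]
  have hpq : p ≤ q := by simp only [hpdef, hqdef]; linarith
  have hp0 : (0:ℝ) < p := by linarith
  have hq0 : (0:ℝ) < q := by linarith
  have hm1 : (1:ℝ) ≤ 1 + m ^ 2 := by nlinarith [sq_nonneg m]
  have hm0 : (0:ℝ) < 1 + m ^ 2 := by linarith
  have hγhalf : (1:ℝ)/2 ≤ γ := by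
    rw [hγdef]; have := le_max_left (1:ℝ) θ; linarith
  set G : ℝ := (1 + m ^ 2) ^ γ with hGdef
  set P : ℝ := p ^ (θ/2) * q ^ (θ/2) with hPdef
  have hG0 : 0 < G := Real.rpow_pos_of_pos hm0 _
  have hP0 : 0 < P := mul_pos (Real.rpow_pos_of_pos hp0 _) (Real.rpow_pos_of_pos hq0 _)
  have hmG : |m| ≤ G := by
    calc |m| ≤ (1 + m ^ 2) ^ ((1:ℝ)/2) := abs_le_rpow_half hm0.le (by linarith)
      _ ≤ G := Real.rpow_le_rpow_of_exponent_le hm1 hγhalf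
  -- Term A : |m| * p ^ θ ≤ G * P
  have htermA : |m| * p ^ θ ≤ G * P := by
    have h1 : p ^ θ ≤ P := by
      rw [hPdef, ← rpow_half_mul hp0]
      exact mul_le_mul_of_nonneg_left
        (Real.rpow_le_rpow hp0.le hpq (by linarith)) (Real.rpow_pos_of_pos hp0 _).le
    exact mul_le_mul hmG h1 (Real.rpow_pos_of_pos hp0 _).le hG0.le
  -- Term B : |x| * (q^θ - p^θ) ≤ 2 E 2^θ G P
  have hxabs : |x| ≤ p ^ ((1:ℝ)/2) := abs_le_rpow_half hp0.le (by linarith)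
  have hyabs : |y| ≤ q ^ ((1:ℝ)/2) := abs_le_rpow_half hq0.le (by linarith)
  have hxy' : |x| ≤ |y| := by
    rw [← Real.sqrt_sq_eq_abs, ← Real.sqrt_sq_eq_abs]; exact Real.sqrt_le_sqrt hxy
  have hqp_m : q - p ≤ 2 * q ^ ((1:ℝ)/2) * |m| := by
    have h1 : q - p = (y + x) * m := by rw [hpdef, hqdef, hmdef]; ring
    calc q - p = (y + x) * m := h1
      _ ≤ |(y + x) * m| := le_abs_self _
      _ = |y + x| * |m| := abs_mul _ _
      _ ≤ (2 * q ^ ((1:ℝ)/2)) * |m| := by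
          apply mul_le_mul_of_nonneg_right _ (abs_nonneg m)
          calc |y + x| ≤ |y| + |x| := abs_add_le _ _
            _ ≤ 2 * q ^ ((1:ℝ)/2) := by linarith [hxy'.trans hyabs]
      _ = 2 * q ^ ((1:ℝ)/2) * |m| := by ring
  have hstep := step1 hθ0 hp1 hpq
  have hmono : p ^ θ ≤ q ^ θ := Real.rpow_le_rpow hp0.le hpq hθ0.le
  have hqθ1 : (0:ℝ) < q ^ (θ - 1) := Real.rpow_pos_of_pos hq0 _
  have htermB : |x| * (q ^ θ - p ^ θ) ≤ 2 * E * 2 ^ θ * (G * P) := by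
    have hmain : |x| * (q ^ θ - p ^ θ) ≤
        2 * E * (|m| * (p ^ ((1:ℝ)/2) * (q ^ ((1:ℝ)/2) * q ^ (θ - 1)))) := by
      calc |x| * (q ^ θ - p ^ θ) ≤ p ^ ((1:ℝ)/2) * (E * ((q - p) * q ^ (θ - 1))) := by
            apply mul_le_mul hxabs hstep (by linarith) (Real.rpow_pos_of_pos hp0 _).le
        _ ≤ p ^ ((1:ℝ)/2) * (E * ((2 * q ^ ((1:ℝ)/2) * |m|) * q ^ (θ - 1))) := by
            apply mul_le_mul_of_nonneg_left _ (Real.rpow_pos_of_pos hp0 _).le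
            apply mul_le_mul_of_nonneg_left _ (by linarith)
            exact mul_le_mul_of_nonneg_right hqp_m hqθ1.le
        _ = 2 * E * (|m| * (p ^ ((1:ℝ)/2) * (q ^ ((1:ℝ)/2) * q ^ (θ - 1)))) := by ring
    -- now bound |m| * (p^(1/2) * (q^(1/2) * q^(θ-1))) ≤ 2^θ * G * P
    have hcore : |m| * (p ^ ((1:ℝ)/2) * (q ^ ((1:ℝ)/2) * q ^ (θ - 1))) ≤ 2 ^ θ * (G * P) := by
      have hqsplit : q ^ ((1:ℝ)/2) * q ^ (θ - 1) = q ^ (θ/2) * q ^ ((θ-1)/2) := by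
        rw [← Real.rpow_add hq0, ← Real.rpow_add hq0]; ring_nf
      rcases le_or_gt θ 1 with h1 | h1
      · -- θ ≤ 1
        have hps : p ^ ((1:ℝ)/2) = p ^ (θ/2) * p ^ ((1-θ)/2) := by
          rw [← Real.rpow_add hp0]; ring_nf
        have h2 : p ^ ((1-θ)/2) * q ^ ((θ-1)/2) ≤ 1 := by
          have h3 : p ^ ((1-θ)/2) ≤ q ^ ((1-θ)/2) :=
            Real.rpow_le_rpow hp0.le hpq (by linarith)
          have h4 : q ^ ((1-θ)/2) * q ^ ((θ-1)/2) = 1 := by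
            rw [← Real.rpow_add hq0, show (1-θ)/2 + (θ-1)/2 = 0 by ring, Real.rpow_zero]
          calc p ^ ((1-θ)/2) * q ^ ((θ-1)/2) ≤ q ^ ((1-θ)/2) * q ^ ((θ-1)/2) :=
                mul_le_mul_of_nonneg_right h3 (Real.rpow_pos_of_pos hq0 _).le
            _ = 1 := h4
        have h5 : p ^ ((1:ℝ)/2) * (q ^ ((1:ℝ)/2) * q ^ (θ - 1)) ≤ P := by
          rw [hqsplit, hps, hPdef]
          calc p ^ (θ/2) * p ^ ((1-θ)/2) * (q ^ (θ/2) * q ^ ((θ-1)/2))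
              = (p ^ (θ/2) * q ^ (θ/2)) * (p ^ ((1-θ)/2) * q ^ ((θ-1)/2)) := by ring
            _ ≤ (p ^ (θ/2) * q ^ (θ/2)) * 1 := mul_le_mul_of_nonneg_left h2 hP0.le
            _ = p ^ (θ/2) * q ^ (θ/2) := by ring
        have h2θ : (1:ℝ) ≤ 2 ^ θ := Real.one_le_rpow one_le_two hθ0.le
        calc |m| * (p ^ ((1:ℝ)/2) * (q ^ ((1:ℝ)/2) * q ^ (θ - 1))) ≤ G * P := by
              exact mul_le_mul hmG h5 (mul_nonneg (Real.rpow_pos_of_pos hp0 ((1:ℝ)/2)).le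
                (mul_nonneg (Real.rpow_pos_of_pos hq0 ((1:ℝ)/2)).le hqθ1.le)) hG0.le
          _ ≤ 2 ^ θ * (G * P) := by
              nth_rewrite 1 [← one_mul (G * P)]
              exact mul_le_mul_of_nonneg_right h2θ (mul_pos hG0 hP0).le
      · -- θ > 1
        have hγθ : γ = θ/2 := by rw [hγdef, max_eq_right h1.le]
        have hPeetre : q ≤ 2 * p * (1 + m ^ 2) := by
          rw [hpdef, hqdef, hmdef]; nlinarith [sq_nonneg (x - (y - x)), sq_nonneg (x * (y - x))]
        have h6 : q ^ ((θ-1)/2) ≤ (2 * p * (1 + m ^ 2)) ^ ((θ-1)/2) :=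
          Real.rpow_le_rpow hq0.le hPeetre (by linarith)
        have h7 : (2 * p * (1 + m ^ 2)) ^ ((θ-1)/2) =
            2 ^ ((θ-1)/2) * p ^ ((θ-1)/2) * (1 + m ^ 2) ^ ((θ-1)/2) := by
          rw [Real.mul_rpow (by positivity) (by positivity),
              Real.mul_rpow (by positivity) (by positivity)]
        have hps2 : p ^ ((1:ℝ)/2) * p ^ ((θ-1)/2) = p ^ (θ/2) := by
          rw [← Real.rpow_add hp0]; ring_nf
        have hms2 : |m| * (1 + m ^ 2) ^ ((θ-1)/2) ≤ G := by
          rw [hGdef, hγθ]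
          calc |m| * (1 + m ^ 2) ^ ((θ-1)/2)
              ≤ (1 + m ^ 2) ^ ((1:ℝ)/2) * (1 + m ^ 2) ^ ((θ-1)/2) := by
                apply mul_le_mul_of_nonneg_right (abs_le_rpow_half hm0.le (by linarith))
                  (Real.rpow_pos_of_pos hm0 _).le
            _ = (1 + m ^ 2) ^ (θ/2) := by rw [← Real.rpow_add hm0]; ring_nf
        have h2θ' : (2:ℝ) ^ ((θ-1)/2) ≤ 2 ^ θ :=
          Real.rpow_le_rpow_of_exponent_le one_le_two (by linarith)
        calc |m| * (p ^ ((1:ℝ)/2) * (q ^ ((1:ℝ)/2) * q ^ (θ - 1)))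
            = |m| * (p ^ ((1:ℝ)/2) * (q ^ (θ/2) * q ^ ((θ-1)/2))) := by rw [hqsplit]
          _ ≤ |m| * (p ^ ((1:ℝ)/2) * (q ^ (θ/2) *
                (2 ^ ((θ-1)/2) * p ^ ((θ-1)/2) * (1 + m ^ 2) ^ ((θ-1)/2)))) := by
              apply mul_le_mul_of_nonneg_left _ (abs_nonneg m)
              apply mul_le_mul_of_nonneg_left _ (Real.rpow_pos_of_pos hp0 _).le
              apply mul_le_mul_of_nonneg_left _ (Real.rpow_pos_of_pos hq0 _).le
              rw [← h7]; exact h6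
          _ = 2 ^ ((θ-1)/2) * ((|m| * (1 + m ^ 2) ^ ((θ-1)/2)) *
                ((p ^ ((1:ℝ)/2) * p ^ ((θ-1)/2)) * q ^ (θ/2))) := by ring
          _ ≤ 2 ^ θ * ((|m| * (1 + m ^ 2) ^ ((θ-1)/2)) *
                ((p ^ ((1:ℝ)/2) * p ^ ((θ-1)/2)) * q ^ (θ/2))) := by
              apply mul_le_mul_of_nonneg_right h2θ'
              have h8 := (Real.rpow_pos_of_pos hm0 ((θ-1)/2)).le
              have h9 := (Real.rpow_pos_of_pos hp0 ((1:ℝ)/2)).le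
              have h10 := (Real.rpow_pos_of_pos hp0 ((θ-1)/2)).le
              have h11 := (Real.rpow_pos_of_pos hq0 (θ/2)).le
              have h12 := abs_nonneg m
              nlinarith [mul_nonneg h12 h8, mul_nonneg h9 h10, mul_nonneg (mul_nonneg h9 h10) h11]
          _ = 2 ^ θ * ((|m| * (1 + m ^ 2) ^ ((θ-1)/2)) * (p ^ (θ/2) * q ^ (θ/2))) := by
              rw [hps2]
          _ ≤ 2 ^ θ * (G * P) := by
              apply mul_le_mul_of_nonneg_left _ (Real.rpow_pos_of_pos two_pos θ).le
              rw [hPdef]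
              exact mul_le_mul_of_nonneg_right hms2 hP0.le
    calc |x| * (q ^ θ - p ^ θ)
        ≤ 2 * E * (|m| * (p ^ ((1:ℝ)/2) * (q ^ ((1:ℝ)/2) * q ^ (θ - 1)))) := hmain
      _ ≤ 2 * E * (2 ^ θ * (G * P)) := by
          apply mul_le_mul_of_nonneg_left hcore (by linarith)
      _ = 2 * E * 2 ^ θ * (G * P) := by ring
  -- combine
  have hsplit : x * q ^ θ - y * p ^ θ = x * (q ^ θ - p ^ θ) - m * p ^ θ := by
    rw [hmdef]; ring
  have hPprod : ((1 + x ^ 2) * (1 + y ^ 2)) ^ (θ / 2) = P := by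
    rw [hPdef, ← Real.mul_rpow hp0.le hq0.le]
  rw [hPprod]
  calc |x * q ^ θ - y * p ^ θ| = |x * (q ^ θ - p ^ θ) - m * p ^ θ| := by rw [hsplit]
    _ ≤ |x * (q ^ θ - p ^ θ)| + |m * p ^ θ| := abs_sub _ _
    _ = |x| * (q ^ θ - p ^ θ) + |m| * p ^ θ := by
        rw [abs_mul, abs_mul, abs_of_nonneg (by linarith : (0:ℝ) ≤ q ^ θ - p ^ θ),
          abs_of_nonneg (Real.rpow_pos_of_pos hp0 θ).le]
    _ ≤ 2 * E * 2 ^ θ * (G * P) + G * P := add_le_add htermB htermA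
    _ = (2 * E * 2 ^ θ + 1) * G * P := by ring

lemma kernel {θ x y : ℝ} (hθ : 1/2 < θ) :
    |x * (1 + y ^ 2) ^ θ - y * (1 + x ^ 2) ^ θ| ≤
      (2 * max θ θ⁻¹ * 2 ^ θ + 1) * (1 + (y - x) ^ 2) ^ (max 1 θ / 2) *
        ((1 + x ^ 2) * (1 + y ^ 2)) ^ (θ / 2) := by
  rcases le_or_gt (x ^ 2) (y ^ 2) with h | h
  · exact kernel_aux hθ h
  · have := kernel_aux hθ h.le
    calc |x * (1 + y ^ 2) ^ θ - y * (1 + x ^ 2) ^ θ|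
        = |y * (1 + x ^ 2) ^ θ - x * (1 + y ^ 2) ^ θ| := abs_sub_comm _ _
      _ ≤ (2 * max θ θ⁻¹ * 2 ^ θ + 1) * (1 + (x - y) ^ 2) ^ (max 1 θ / 2) *
            ((1 + y ^ 2) * (1 + x ^ 2)) ^ (θ / 2) := this
      _ = (2 * max θ θ⁻¹ * 2 ^ θ + 1) * (1 + (y - x) ^ 2) ^ (max 1 θ / 2) *
            ((1 + x ^ 2) * (1 + y ^ 2)) ^ (θ / 2) := by
          rw [mul_comm (1 + y ^ 2), show (x - y) ^ 2 = (y - x) ^ 2 by ring]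

end Acc2


namespace Acc

lemma summable_weight {t : ℝ} (ht : t < -(1/2)) : Summable (fun m : ℤ => (1 + (m:ℝ) ^ 2) ^ t) := by
  have hb : 1 < -(2*t) := by linarith
  have hg : Summable (fun m : ℤ => |(m:ℝ)| ^ (2*t)) := by
    have := Real.summable_abs_int_rpow hb
    simpa using this
  apply Summable.of_norm_bounded_eventually hg
  rw [Filter.eventually_cofinite]
  apply Set.Finite.subset (Set.finite_singleton (0:ℤ))
  intro m hm
  simp only [Set.mem_setOf_eq, not_le] at hm
  by_contra hm0
  apply absurd hm; push_neg
  have hm1 : (1:ℝ) ≤ |(m:ℝ)| := by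
    have : m ≠ 0 := by simpa using hm0
    have : (1:ℤ) ≤ |m| := Int.one_le_abs (by simpa using this)
    calc (1:ℝ) ≤ (|m| : ℤ) := by exact_mod_cast this
      _ = |(m:ℝ)| := by push_cast; rfl
  have habs : |(m:ℝ)| ^ (2*t) = (|(m:ℝ)| ^ 2) ^ t := by
    rw [← Real.rpow_natCast |(m:ℝ)| 2, ← Real.rpow_mul (abs_nonneg _)]
    norm_num [mul_comm]
  have hle : (|(m:ℝ)| ^ 2 : ℝ) ≤ 1 + (m:ℝ) ^ 2 := by
    rw [sq_abs]; linarith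
  have h2 : (1 + (m:ℝ) ^ 2) ^ t ≤ (|(m:ℝ)| ^ 2) ^ t := by
    apply Real.rpow_le_rpow_of_nonpos _ hle (by linarith)
    nlinarith
  rw [Real.norm_eq_abs, abs_of_nonneg (Real.rpow_nonneg (by nlinarith) t), habs]
  exact h2

lemma tsum_cs {x y : ℤ → ℝ} (hx : ∀ m, 0 ≤ x m) (hy : ∀ m, 0 ≤ y m)
    (hx2 : Summable fun m => x m ^ 2) (hy2 : Summable fun m => y m ^ 2) :
    Summable (fun m => x m * y m) ∧
      ∑' m, x m * y m ≤ Real.sqrt (∑' m, x m ^ 2) * Real.sqrt (∑' m, y m ^ 2) := by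
  have hsum : Summable (fun m => x m * y m) := by
    apply Summable.of_nonneg_of_le (fun m => mul_nonneg (hx m) (hy m))
      (fun m => ?_) ((hx2.add hy2).mul_left (1/2))
    nlinarith [sq_nonneg (x m - y m)]
  refine ⟨hsum, ?_⟩
  set X := Real.sqrt (∑' m, x m ^ 2) with hX
  set Y := Real.sqrt (∑' m, y m ^ 2) with hY
  have hX0 : 0 ≤ X := Real.sqrt_nonneg _
  have hY0 : 0 ≤ Y := Real.sqrt_nonneg _
  have hXsq : X ^ 2 = ∑' m, x m ^ 2 := Real.sq_sqrt (tsum_nonneg (fun m => sq_nonneg _))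
  have hYsq : Y ^ 2 = ∑' m, y m ^ 2 := Real.sq_sqrt (tsum_nonneg (fun m => sq_nonneg _))
  rcases eq_or_lt_of_le hX0 with hX0' | hX0'
  · -- X = 0 : every x m = 0
    have hzero : ∀ m, x m = 0 := by
      intro m
      have h1 : ∑' m, x m ^ 2 = 0 := by rw [← hXsq, ← hX0']; norm_num
      have h2 : x m ^ 2 ≤ 0 := h1 ▸ Summable.le_tsum hx2 m (fun n _ => sq_nonneg _)
      nlinarith [sq_nonneg (x m)]
    have : ∀ m, x m * y m = 0 := fun m => by rw [hzero m, zero_mul]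
    rw [tsum_congr this, tsum_zero]
    positivity
  rcases eq_or_lt_of_le hY0 with hY0' | hY0'
  · have hzero : ∀ m, y m = 0 := by
      intro m
      have h1 : ∑' m, y m ^ 2 = 0 := by rw [← hYsq, ← hY0']; norm_num
      have h2 : y m ^ 2 ≤ 0 := h1 ▸ Summable.le_tsum hy2 m (fun n _ => sq_nonneg _)
      nlinarith [sq_nonneg (y m)]
    have : ∀ m, x m * y m = 0 := fun m => by rw [hzero m, mul_zero]
    rw [tsum_congr this, tsum_zero]
    positivity
  -- main case
  set ε := Y / X with hε
  have hε0 : 0 < ε := div_pos hY0' hX0'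
  have key : ∀ m, x m * y m ≤ (ε * x m ^ 2 + y m ^ 2 / ε) / 2 := by
    intro m
    rw [le_div_iff₀ (by norm_num : (0:ℝ) < 2)]
    have h1 : 0 ≤ (x m * ε - y m) ^ 2 / ε := div_nonneg (sq_nonneg _) hε0.le
    have h2 : (x m * ε - y m) ^ 2 / ε = ε * x m ^ 2 + y m ^ 2 / ε - 2 * (x m * y m) := by
      field_simp; ring
    linarith [h2 ▸ h1]
  have hsum2 : Summable (fun m => (ε * x m ^ 2 + y m ^ 2 / ε) / 2) := by
    apply Summable.mul_right
    exact (hx2.mul_left ε).add (hy2.div_const ε)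
  calc ∑' m, x m * y m ≤ ∑' m, (ε * x m ^ 2 + y m ^ 2 / ε) / 2 :=
        Summable.tsum_le_tsum key hsum hsum2
    _ = (ε * ∑' m, x m ^ 2 + (∑' m, y m ^ 2) / ε) / 2 := by
        rw [tsum_div_const, Summable.tsum_add ((hx2.mul_left ε)) (hy2.div_const ε), tsum_mul_left,
          tsum_div_const]
    _ = X * Y := by
        rw [← hXsq, ← hYsq, hε]
        field_simp
        ring

end Acc


namespace Acc

/-- shear equivalence (m, j) ↦ (m + j, j) -/
def shear : ℤ × ℤ ≃ ℤ × ℤ where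
  toFun p := (p.1 + p.2, p.2)
  invFun p := (p.1 - p.2, p.2)
  left_inv p := by simp
  right_inv p := by simp

lemma bilinear {α A B : ℤ → ℝ} (hα : ∀ m, 0 ≤ α m) (hA : ∀ k, 0 ≤ A k) (hB : ∀ k, 0 ≤ B k)
    (hα1 : Summable α) (hA2 : Summable fun k => A k ^ 2) (hB2 : Summable fun k => B k ^ 2) :
    Summable (fun p : ℤ × ℤ => α (p.1 - p.2) * (B p.2 * A p.1)) ∧
      ∑' p : ℤ × ℤ, α (p.1 - p.2) * (B p.2 * A p.1) ≤
        (∑' m, α m) * (((∑' k, A k ^ 2) + ∑' k, B k ^ 2) / 2) := by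
  set TA := ∑' k, A k ^ 2 with hTA
  set TB := ∑' k, B k ^ 2 with hTB
  have hTA0 : 0 ≤ TA := tsum_nonneg fun k => sq_nonneg _
  have hTB0 : 0 ≤ TB := tsum_nonneg fun k => sq_nonneg _
  have hshift : ∀ m : ℤ, Summable (fun j : ℤ => A (m + j) ^ 2) := fun m =>
    ((Equiv.addLeft m).summable_iff (f := fun k => A k ^ 2)).2 hA2
  have hshift_sum : ∀ m : ℤ, ∑' j : ℤ, A (m + j) ^ 2 = TA := fun m =>
    (Equiv.addLeft m).tsum_eq (f := fun k => A k ^ 2)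
  have hmaj : ∀ m : ℤ, Summable (fun j : ℤ => (B j ^ 2 + A (m + j) ^ 2) / 2) := fun m =>
    (hB2.add (hshift m)).div_const 2
  have hAMGM : ∀ m j : ℤ, B j * A (m + j) ≤ (B j ^ 2 + A (m + j) ^ 2) / 2 := by
    intro m j; nlinarith [sq_nonneg (B j - A (m + j)), hB j, hA (m + j)]
  have hrow0 : ∀ m : ℤ, Summable (fun j : ℤ => B j * A (m + j)) := fun m =>
    Summable.of_nonneg_of_le (fun j => mul_nonneg (hB j) (hA _)) (hAMGM m) (hmaj m)
  have hmaj_sum : ∀ m : ℤ, ∑' j : ℤ, (B j ^ 2 + A (m + j) ^ 2) / 2 = (TA + TB) / 2 := by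
    intro m
    rw [tsum_div_const, Summable.tsum_add hB2 (hshift m), hshift_sum m]
    ring
  have hrowbound : ∀ m : ℤ, ∑' j : ℤ, B j * A (m + j) ≤ (TA + TB) / 2 := by
    intro m
    rw [← hmaj_sum m]
    exact Summable.tsum_le_tsum (hAMGM m) (hrow0 m) (hmaj m)
  -- the sheared family G
  set G : ℤ × ℤ → ℝ := fun p => α p.1 * (B p.2 * A (p.1 + p.2)) with hG
  have hG_nonneg : (0:ℤ × ℤ → ℝ) ≤ G := fun p =>
    mul_nonneg (hα _) (mul_nonneg (hB _) (hA _))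
  have hGrow : ∀ m : ℤ, Summable fun j => G (m, j) := fun m => (hrow0 m).mul_left (α m)
  have hGrowsum : ∀ m : ℤ, ∑' j, G (m, j) = α m * ∑' j, B j * A (m + j) := by
    intro m
    simp only [hG]
    exact tsum_mul_left
  have hGrowsum_le : ∀ m : ℤ, ∑' j, G (m, j) ≤ α m * ((TA + TB) / 2) := by
    intro m
    rw [hGrowsum m]
    exact mul_le_mul_of_nonneg_left (hrowbound m) (hα m)
  have hGrowsum_summable : Summable fun m => ∑' j, G (m, j) := by
    apply Summable.of_nonneg_of_le (fun m => tsum_nonneg (fun j => hG_nonneg (m, j)))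
      hGrowsum_le (hα1.mul_right _)
  have hGsummable : Summable G :=
    (summable_prod_of_nonneg hG_nonneg).2 ⟨hGrow, hGrowsum_summable⟩
  -- transfer to F
  set F : ℤ × ℤ → ℝ := fun p => α (p.1 - p.2) * (B p.2 * A p.1) with hF
  have hFG : ∀ p : ℤ × ℤ, F (shear p) = G p := by
    intro p
    simp only [hF, hG, shear, Equiv.coe_fn_mk, add_sub_cancel_right]
  have hFsummable : Summable F := by
    rw [← shear.summable_iff]
    exact hGsummable.congr (fun p => (hFG p).symm)
  refine ⟨hFsummable, ?_⟩
  have htsum_eq : ∑' p, F p = ∑' p, G p := by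
    rw [← shear.tsum_eq F]
    exact tsum_congr hFG
  rw [htsum_eq, Summable.tsum_prod' hGsummable hGrow]
  calc ∑' m, ∑' j, G (m, j) ≤ ∑' m : ℤ, α m * ((TA + TB) / 2) :=
        Summable.tsum_le_tsum hGrowsum_le hGrowsum_summable (hα1.mul_right _)
    _ = (∑' m, α m) * ((TA + TB) / 2) := tsum_mul_right

end Acc


namespace Acc

/-- coefficients of `Dx w` -/
def cDx (w : ℝ → ℝ) (j : ℤ) : ℂ := ((2 * Real.pi : ℝ) : ℂ) * Complex.I * (j : ℂ) * fc w j

lemma cDx_norm (w : ℝ → ℝ) (j : ℤ) : ‖cDx w j‖ = 2 * Real.pi * |(j:ℝ)| * ‖fc w j‖ := by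
  unfold cDx
  rw [norm_mul, norm_mul, norm_mul, Complex.norm_real, Complex.norm_I, Real.norm_eq_abs,
    abs_of_pos (by positivity : (0:ℝ) < 2 * Real.pi), mul_one,
    show ((j:ℤ):ℂ) = (((j:ℝ)):ℂ) by push_cast; rfl, Complex.norm_real, Real.norm_eq_abs]

lemma cDx_conj (w : ℝ → ℝ) (j : ℤ) : (starRingEnd ℂ) (cDx w (-j)) = cDx w j := by
  unfold cDx
  rw [map_mul, map_mul, map_mul, Complex.conj_I, Complex.conj_ofReal, map_intCast, ← fc_neg]
  push_cast
  ring

lemma dx_re (w : ℝ → ℝ) (x : ℝ) : Dx w x = (∑' j : ℤ, cDx w j * ee j x).re := rfl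

lemma T_conj (w : ℝ → ℝ) (x : ℝ) :
    (starRingEnd ℂ) (∑' j : ℤ, cDx w j * ee j x) = ∑' j : ℤ, cDx w j * ee j x := by
  rw [starRingEnd_apply, tsum_star]
  have h1 : ∀ j : ℤ, star (cDx w j * ee j x) = (starRingEnd ℂ) (cDx w j) * ee (-j) x := by
    intro j
    rw [star_mul', ← starRingEnd_apply, ← starRingEnd_apply, ee_conj, mul_comm]
  rw [tsum_congr h1]
  have h2 := (Equiv.neg ℤ).tsum_eq (fun j : ℤ => (starRingEnd ℂ) (cDx w j) * ee (-j) x)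
  rw [← h2]
  apply tsum_congr
  intro j
  simp only [Equiv.neg_apply, neg_neg, cDx_conj]

lemma dx_complex (w : ℝ → ℝ) (x : ℝ) :
    ((Dx w x : ℝ) : ℂ) = ∑' j : ℤ, cDx w j * ee j x := by
  rw [dx_re]
  exact Complex.conj_eq_iff_re.1 (T_conj w x)

lemma dx_zero (w : ℝ → ℝ) (hc : ¬ Summable fun j : ℤ => ‖cDx w j‖) (x : ℝ) : Dx w x = 0 := by
  have hns : ¬ Summable (fun j : ℤ => cDx w j * ee j x) := by
    intro hsum
    apply hc
    have := (summable_norm_iff.2 hsum)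
    apply this.congr
    intro j
    rw [norm_mul, ee_norm, mul_one]
  have : ((Dx w x : ℝ) : ℂ) = 0 := by
    rw [dx_complex, tsum_eq_zero_of_not_summable hns]
  exact_mod_cast this

lemma fc_dx_prod (u w : ℝ → ℝ) (hu : IntervalIntegrable u volume 0 1)
    (hc : Summable fun j : ℤ => ‖cDx w j‖) (k : ℤ) :
    fc (fun x => u x * Dx w x) k = ∑' j : ℤ, cDx w j * fc u (k - j) := by
  rw [fc_eq, ← integral_conv hu hc k]
  congr 1
  ext x
  rw [Complex.ofReal_mul, dx_complex w x]

lemma fc_bound {s : ℝ} (hs0 : 0 ≤ s) {f : ℝ → ℝ}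
    (hf : Summable fun k : ℤ => ((1:ℝ) + (k:ℝ) ^ 2) ^ s * ‖fc f k‖ ^ 2) (m : ℤ) :
    ‖fc f m‖ ≤ HsNorm s f := by
  have h1 : ‖fc f m‖ ^ 2 ≤ ((1:ℝ) + (m:ℝ) ^ 2) ^ s * ‖fc f m‖ ^ 2 := by
    nth_rewrite 1 [← one_mul (‖fc f m‖ ^ 2)]
    apply mul_le_mul_of_nonneg_right _ (sq_nonneg _)
    exact Real.one_le_rpow (by nlinarith [sq_nonneg ((m:ℝ))]) hs0
  have h2 : ((1:ℝ) + (m:ℝ) ^ 2) ^ s * ‖fc f m‖ ^ 2 ≤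
      ∑' k : ℤ, ((1:ℝ) + (k:ℝ) ^ 2) ^ s * ‖fc f k‖ ^ 2 :=
    Summable.le_tsum hf m (fun n _ => mul_nonneg (Real.rpow_nonneg (by nlinarith [sq_nonneg ((n:ℝ))]) s)
      (sq_nonneg _))
  unfold HsNorm
  rw [show ‖fc f m‖ = Real.sqrt (‖fc f m‖ ^ 2) from (Real.sqrt_sq (norm_nonneg _)).symm]
  exact Real.sqrt_le_sqrt (h1.trans h2)

lemma rpow_sq {p r : ℝ} (hp : 0 < p) : (p ^ r) ^ 2 = p ^ (2 * r) := by
  rw [pow_two, ← Real.rpow_add hp]; ring_nf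

end Acc


namespace Acc
open Acc2

lemma peetre_rpow {r : ℝ} (hr : 0 ≤ r) (j k : ℤ) :
    ((1:ℝ)+(k:ℝ)^2) ^ r ≤ 2 ^ r * (((1:ℝ)+((k-j:ℤ):ℝ)^2) ^ r * ((1:ℝ)+(j:ℝ)^2) ^ r) := by
  have hcast : (k:ℝ) = ((k-j:ℤ):ℝ) + (j:ℝ) := by push_cast; ring
  have h1 : ((1:ℝ)+(k:ℝ)^2) ≤ 2 * (1+((k-j:ℤ):ℝ)^2) * (1+(j:ℝ)^2) := by
    rw [hcast]
    nlinarith [sq_nonneg (((k-j:ℤ):ℝ) - (j:ℝ)), sq_nonneg (((k-j:ℤ):ℝ) * (j:ℝ))]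
  calc ((1:ℝ)+(k:ℝ)^2) ^ r ≤ (2 * (1+((k-j:ℤ):ℝ)^2) * (1+(j:ℝ)^2)) ^ r :=
        Real.rpow_le_rpow (by positivity) h1 hr
    _ = 2 ^ r * (((1:ℝ)+((k-j:ℤ):ℝ)^2) ^ r * ((1:ℝ)+(j:ℝ)^2) ^ r) := by
        rw [Real.mul_rpow (by positivity) (by positivity),
          Real.mul_rpow (by positivity) (by positivity)]
        ring

lemma crude_bound {s : ℝ} (hθ0 : 0 < s - 1) (u w : ℝ → ℝ) (k j : ℤ) :
    ‖((1:ℝ)+(k:ℝ)^2) ^ (s-1) * (cDx w j * fc u (k-j) * (starRingEnd ℂ) (fc w k)).re‖ ≤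
      2 ^ ((s-1)/2) * ((((1:ℝ)+((k-j:ℤ):ℝ)^2) ^ ((s-1)/2) * ‖fc u (k-j)‖) *
        ((2*Real.pi * (((1:ℝ)+(j:ℝ)^2) ^ (s/2) * ‖fc w j‖)) *
          (((1:ℝ)+(k:ℝ)^2) ^ ((s-1)/2) * ‖fc w k‖))) := by
  have hk1 : (0:ℝ) < 1 + (k:ℝ)^2 := by positivity
  have hj1 : (0:ℝ) < 1 + (j:ℝ)^2 := by positivity
  have hm1 : (0:ℝ) < 1 + ((k-j:ℤ):ℝ)^2 := by positivity
  have hre : ‖(cDx w j * fc u (k-j) * (starRingEnd ℂ) (fc w k)).re‖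
      ≤ ‖cDx w j‖ * ‖fc u (k-j)‖ * ‖fc w k‖ := by
    rw [Real.norm_eq_abs]
    calc |(cDx w j * fc u (k-j) * (starRingEnd ℂ) (fc w k)).re|
        ≤ ‖cDx w j * fc u (k-j) * (starRingEnd ℂ) (fc w k)‖ := by
          exact Complex.abs_re_le_norm _
      _ = ‖cDx w j‖ * ‖fc u (k-j)‖ * ‖fc w k‖ := by
          rw [norm_mul, norm_mul, starRingEnd_apply, norm_star]
  have hcj : ((1:ℝ)+(j:ℝ)^2) ^ ((s-1)/2) * ‖cDx w j‖ ≤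
      2 * Real.pi * (((1:ℝ)+(j:ℝ)^2) ^ (s/2) * ‖fc w j‖) := by
    rw [cDx_norm]
    have h2 : |(j:ℝ)| ≤ ((1:ℝ)+(j:ℝ)^2) ^ ((1:ℝ)/2) :=
      abs_le_rpow_half hj1.le (by nlinarith [sq_nonneg ((j:ℝ))])
    have h3 : ((1:ℝ)+(j:ℝ)^2) ^ ((s-1)/2) * ((1:ℝ)+(j:ℝ)^2) ^ ((1:ℝ)/2)
        = ((1:ℝ)+(j:ℝ)^2) ^ (s/2) := by
      rw [← Real.rpow_add hj1]; ring_nf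
    calc ((1:ℝ)+(j:ℝ)^2) ^ ((s-1)/2) * (2 * Real.pi * |(j:ℝ)| * ‖fc w j‖)
        ≤ ((1:ℝ)+(j:ℝ)^2) ^ ((s-1)/2) * (2 * Real.pi * ((1:ℝ)+(j:ℝ)^2) ^ ((1:ℝ)/2) * ‖fc w j‖) := by
          apply mul_le_mul_of_nonneg_left _ (Real.rpow_nonneg hj1.le _)
          apply mul_le_mul_of_nonneg_right _ (norm_nonneg _)
          apply mul_le_mul_of_nonneg_left h2 (by positivity)
      _ = 2 * Real.pi * (((1:ℝ)+(j:ℝ)^2) ^ (s/2) * ‖fc w j‖) := by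
          rw [← h3]; ring
  have hsplit : ((1:ℝ)+(k:ℝ)^2) ^ (s-1)
      = ((1:ℝ)+(k:ℝ)^2) ^ ((s-1)/2) * ((1:ℝ)+(k:ℝ)^2) ^ ((s-1)/2) :=
    (rpow_half_mul hk1).symm
  have hpeetre := peetre_rpow (by linarith : (0:ℝ) ≤ (s-1)/2) j k
  -- assemble
  rw [norm_mul, Real.norm_eq_abs (((1:ℝ)+(k:ℝ)^2) ^ (s-1)),
    abs_of_pos (Real.rpow_pos_of_pos hk1 _)]
  calc ((1:ℝ)+(k:ℝ)^2) ^ (s-1) * ‖(cDx w j * fc u (k-j) * (starRingEnd ℂ) (fc w k)).re‖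
      ≤ ((1:ℝ)+(k:ℝ)^2) ^ (s-1) * (‖cDx w j‖ * ‖fc u (k-j)‖ * ‖fc w k‖) := by
        apply mul_le_mul_of_nonneg_left hre (Real.rpow_pos_of_pos hk1 _).le
    _ = (((1:ℝ)+(k:ℝ)^2) ^ ((s-1)/2)) * (‖cDx w j‖ * ‖fc u (k-j)‖ *
          (((1:ℝ)+(k:ℝ)^2) ^ ((s-1)/2) * ‖fc w k‖)) := by
        rw [hsplit]; ring
    _ ≤ (2 ^ ((s-1)/2) * (((1:ℝ)+((k-j:ℤ):ℝ)^2) ^ ((s-1)/2) * ((1:ℝ)+(j:ℝ)^2) ^ ((s-1)/2)))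
          * (‖cDx w j‖ * ‖fc u (k-j)‖ * (((1:ℝ)+(k:ℝ)^2) ^ ((s-1)/2) * ‖fc w k‖)) := by
        apply mul_le_mul_of_nonneg_right hpeetre
        have := mul_nonneg (Real.rpow_nonneg hk1.le ((s-1)/2)) (norm_nonneg (fc w k))
        have := norm_nonneg (cDx w j)
        have := norm_nonneg (fc u (k-j))
        positivity
    _ = 2 ^ ((s-1)/2) * ((((1:ℝ)+((k-j:ℤ):ℝ)^2) ^ ((s-1)/2) * ‖fc u (k-j)‖) *
          ((((1:ℝ)+(j:ℝ)^2) ^ ((s-1)/2) * ‖cDx w j‖) *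
            (((1:ℝ)+(k:ℝ)^2) ^ ((s-1)/2) * ‖fc w k‖))) := by ring
    _ ≤ 2 ^ ((s-1)/2) * ((((1:ℝ)+((k-j:ℤ):ℝ)^2) ^ ((s-1)/2) * ‖fc u (k-j)‖) *
          ((2*Real.pi * (((1:ℝ)+(j:ℝ)^2) ^ (s/2) * ‖fc w j‖)) *
            (((1:ℝ)+(k:ℝ)^2) ^ ((s-1)/2) * ‖fc w k‖))) := by
        apply mul_le_mul_of_nonneg_left _ (Real.rpow_nonneg (by norm_num) _)
        apply mul_le_mul_of_nonneg_left _
          (mul_nonneg (Real.rpow_nonneg hm1.le _) (norm_nonneg _))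
        apply mul_le_mul_of_nonneg_right hcj
          (mul_nonneg (Real.rpow_nonneg hk1.le _) (norm_nonneg _))


lemma conj_cDx (w : ℝ → ℝ) (k : ℤ) :
    (starRingEnd ℂ) (cDx w k) =
      -(((2 * Real.pi : ℝ) : ℂ) * Complex.I) * (k : ℂ) * (starRingEnd ℂ) (fc w k) := by
  unfold cDx
  rw [map_mul, map_mul, map_mul, Complex.conj_I, Complex.conj_ofReal, map_intCast]
  ring

lemma conj_fc_flip (u : ℝ → ℝ) (k j : ℤ) :
    (starRingEnd ℂ) (fc u (j - k)) = fc u (k - j) := by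
  rw [show j - k = -(k - j) by ring, fc_neg, Complex.conj_conj]

lemma point_bound {s : ℝ} (hθ : 1/2 < s - 1) (u w : ℝ → ℝ) (k j : ℤ) :
    |((1:ℝ)+(k:ℝ)^2) ^ (s-1) * (cDx w j * fc u (k-j) * (starRingEnd ℂ) (fc w k)).re +
      ((1:ℝ)+(j:ℝ)^2) ^ (s-1) * (cDx w k * fc u (j-k) * (starRingEnd ℂ) (fc w j)).re| ≤
    2 * Real.pi * (2 * max (s-1) (s-1)⁻¹ * 2 ^ (s-1) + 1) *
      (((((1:ℝ)+((k-j:ℤ):ℝ)^2) ^ (max 1 (s-1) / 2)) * ‖fc u (k-j)‖) *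
        (((((1:ℝ)+(j:ℝ)^2) ^ ((s-1)/2)) * ‖fc w j‖) *
          ((((1:ℝ)+(k:ℝ)^2) ^ ((s-1)/2)) * ‖fc w k‖))) := by
  have hk1 : (0:ℝ) < 1 + (k:ℝ)^2 := by positivity
  have hj1 : (0:ℝ) < 1 + (j:ℝ)^2 := by positivity
  set z₁ : ℂ := ((((1:ℝ)+(k:ℝ)^2) ^ (s-1) : ℝ) : ℂ) *
    (cDx w j * fc u (k-j) * (starRingEnd ℂ) (fc w k)) with hz₁
  set z₂ : ℂ := ((((1:ℝ)+(j:ℝ)^2) ^ (s-1) : ℝ) : ℂ) *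
    (cDx w k * fc u (j-k) * (starRingEnd ℂ) (fc w j)) with hz₂
  have hre1 : ((1:ℝ)+(k:ℝ)^2) ^ (s-1) * (cDx w j * fc u (k-j) * (starRingEnd ℂ) (fc w k)).re
      = z₁.re := (Complex.re_ofReal_mul _ _).symm
  have hre2 : ((1:ℝ)+(j:ℝ)^2) ^ (s-1) * (cDx w k * fc u (j-k) * (starRingEnd ℂ) (fc w j)).re
      = ((starRingEnd ℂ) z₂).re := by
    rw [Complex.conj_re]
    exact (Complex.re_ofReal_mul _ _).symm
  have hiden : z₁ + (starRingEnd ℂ) z₂ =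
      (((2 * Real.pi : ℝ) : ℂ) * Complex.I) * (fc u (k-j) * (fc w j * (starRingEnd ℂ) (fc w k)))
        * ((((j:ℝ) * ((1:ℝ)+(k:ℝ)^2) ^ (s-1) - (k:ℝ) * ((1:ℝ)+(j:ℝ)^2) ^ (s-1) : ℝ)) : ℂ) := by
    rw [hz₁, hz₂, map_mul, map_mul, map_mul, Complex.conj_ofReal, conj_cDx, conj_fc_flip, Complex.conj_conj]
    unfold cDx
    push_cast
    ring
  have habs : |z₁.re + ((starRingEnd ℂ) z₂).re| ≤ ‖z₁ + (starRingEnd ℂ) z₂‖ := by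
    rw [show z₁.re + ((starRingEnd ℂ) z₂).re = (z₁ + (starRingEnd ℂ) z₂).re from
      (Complex.add_re _ _).symm]
    exact Complex.abs_re_le_norm _
  have hnorm : ‖z₁ + (starRingEnd ℂ) z₂‖ = 2 * Real.pi *
      (‖fc u (k-j)‖ * (‖fc w j‖ * ‖fc w k‖)) *
      |(j:ℝ) * ((1:ℝ)+(k:ℝ)^2) ^ (s-1) - (k:ℝ) * ((1:ℝ)+(j:ℝ)^2) ^ (s-1)| := by
    rw [hiden, norm_mul, norm_mul, norm_mul, norm_mul, norm_mul, Complex.norm_I,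
      Complex.norm_real, Complex.norm_real, starRingEnd_apply, norm_star,
      Real.norm_eq_abs, Real.norm_eq_abs, abs_of_pos (by positivity : (0:ℝ) < 2 * Real.pi)]
    ring
  have hker := kernel (x := (j:ℝ)) (y := (k:ℝ)) hθ
  have hcast : ((k:ℝ) - (j:ℝ)) = ((k-j:ℤ):ℝ) := by push_cast; ring
  rw [hcast] at hker
  have hmulr : (((1:ℝ)+(j:ℝ)^2) * ((1:ℝ)+(k:ℝ)^2)) ^ ((s-1)/2)
      = ((1:ℝ)+(j:ℝ)^2) ^ ((s-1)/2) * ((1:ℝ)+(k:ℝ)^2) ^ ((s-1)/2) :=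
    Real.mul_rpow hj1.le hk1.le
  rw [hmulr] at hker
  calc |((1:ℝ)+(k:ℝ)^2) ^ (s-1) * (cDx w j * fc u (k-j) * (starRingEnd ℂ) (fc w k)).re +
      ((1:ℝ)+(j:ℝ)^2) ^ (s-1) * (cDx w k * fc u (j-k) * (starRingEnd ℂ) (fc w j)).re|
      = |z₁.re + ((starRingEnd ℂ) z₂).re| := by rw [hre1, hre2]
    _ ≤ ‖z₁ + (starRingEnd ℂ) z₂‖ := habs
    _ = 2 * Real.pi * (‖fc u (k-j)‖ * (‖fc w j‖ * ‖fc w k‖)) *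
        |(j:ℝ) * ((1:ℝ)+(k:ℝ)^2) ^ (s-1) - (k:ℝ) * ((1:ℝ)+(j:ℝ)^2) ^ (s-1)| := hnorm
    _ ≤ 2 * Real.pi * (‖fc u (k-j)‖ * (‖fc w j‖ * ‖fc w k‖)) *
        ((2 * max (s-1) (s-1)⁻¹ * 2 ^ (s-1) + 1) * ((1:ℝ)+((k-j:ℤ):ℝ)^2) ^ (max 1 (s-1) / 2) *
          (((1:ℝ)+(j:ℝ)^2) ^ ((s-1)/2) * ((1:ℝ)+(k:ℝ)^2) ^ ((s-1)/2))) := by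
        apply mul_le_mul_of_nonneg_left hker
        positivity
    _ = 2 * Real.pi * (2 * max (s-1) (s-1)⁻¹ * 2 ^ (s-1) + 1) *
      (((((1:ℝ)+((k-j:ℤ):ℝ)^2) ^ (max 1 (s-1) / 2)) * ‖fc u (k-j)‖) *
        (((((1:ℝ)+(j:ℝ)^2) ^ ((s-1)/2)) * ‖fc w j‖) *
          ((((1:ℝ)+(k:ℝ)^2) ^ ((s-1)/2)) * ‖fc w k‖))) := by ring


end Acc

end AccHelpers

/-- **`H^{s-1}`-accretivity estimate.**
For `s > 3/2` there is `C > 0`, depending only on `s`, such that for all real-valued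
`u, w ∈ H^s(𝕊)` one has `|(u·∂ₓw, w)_{s-1}| ≤ C ‖u‖_s ‖w‖²_{s-1}`. -/
theorem Hs_minus_one_accretivity_estimate
    (s : ℝ) (hs : s > 3 / 2) :
    ∃ C > (0:ℝ), ∀ u w : ℝ → ℝ, InHs s u → InHs s w →
      |HsInner (s - 1) (fun x => u x * Dx w x) w| ≤
        C * HsNorm s u * (HsNorm (s - 1) w) ^ 2 := by
  have hθ : 1/2 < s - 1 := by linarith
  have hθ0 : (0:ℝ) < s - 1 := by linarith
  set θ : ℝ := s - 1 with hθdef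
  set γ : ℝ := max 1 θ / 2 with hγdef
  set Cker : ℝ := 2 * max θ θ⁻¹ * 2 ^ θ + 1 with hCkerdef
  set D : ℝ := Real.sqrt (∑' m : ℤ, (((1:ℝ) + (m:ℝ) ^ 2) ^ (γ - s/2)) ^ 2) with hDdef
  have hE0 : (0:ℝ) < max θ θ⁻¹ := lt_of_lt_of_le hθ0 (le_max_left _ _)
  have h2θ0 : (0:ℝ) < 2 ^ θ := Real.rpow_pos_of_pos two_pos θ
  have hCker0 : (0:ℝ) < Cker := by
    rw [hCkerdef]; nlinarith
  have hD0 : (0:ℝ) ≤ D := Real.sqrt_nonneg _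
  have hπ : (0:ℝ) < Real.pi := Real.pi_pos
  have hCD : (0:ℝ) ≤ Real.pi * Cker * D := mul_nonneg (mul_nonneg hπ.le hCker0.le) hD0
  refine ⟨Real.pi * Cker * D + 1, by linarith, fun u w hu hw => ?_⟩
  have hXnn : 0 ≤ HsNorm s u := Real.sqrt_nonneg _
  have hWnn : 0 ≤ HsNorm (s-1) w := Real.sqrt_nonneg _
  have hRHSfact : Real.pi * Cker * D * HsNorm s u * (HsNorm (s-1) w) ^ 2 ≤
      (Real.pi * Cker * D + 1) * HsNorm s u * (HsNorm (s-1) w) ^ 2 := by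
    nlinarith [sq_nonneg (HsNorm (s-1) w), mul_nonneg hXnn (sq_nonneg (HsNorm (s-1) w))]
  by_cases hc : Summable (fun j : ℤ => ‖Acc.cDx w j‖)
  · -- main case
    obtain ⟨huP, huI, hu2⟩ := hu
    obtain ⟨hwP, hwI, hw2⟩ := hw
    have h1pos : ∀ n : ℤ, (0:ℝ) < 1 + (n:ℝ)^2 := fun n => by positivity
    have h1le : ∀ n : ℤ, (1:ℝ) ≤ 1 + (n:ℝ)^2 := fun n => by nlinarith [sq_nonneg ((n:ℝ))]
    have hCkerval : Cker = 2 * max (s-1) (s-1)⁻¹ * 2 ^ (s-1) + 1 := by rw [hCkerdef]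
    have hDval : D = Real.sqrt (∑' m : ℤ,
        (((1:ℝ) + (m:ℝ) ^ 2) ^ (max 1 (s-1) / 2 - s/2)) ^ 2) := by rw [hDdef, hγdef]
    -- sequences
    set A : ℤ → ℝ := fun n => ((1:ℝ)+(n:ℝ)^2) ^ ((s-1)/2) * ‖fc w n‖ with hAdef
    set B : ℤ → ℝ := fun n => 2*Real.pi * (((1:ℝ)+(n:ℝ)^2) ^ (s/2) * ‖fc w n‖) with hBdef
    set al : ℤ → ℝ := fun n => ((1:ℝ)+(n:ℝ)^2) ^ (max 1 (s-1) / 2) * ‖fc u n‖ with haldef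
    set al2 : ℤ → ℝ := fun n => ((1:ℝ)+(n:ℝ)^2) ^ ((s-1)/2) * ‖fc u n‖ with hal2def
    have hAnn : ∀ n, 0 ≤ A n := fun n =>
      mul_nonneg (Real.rpow_nonneg (h1pos n).le _) (norm_nonneg _)
    have hBnn : ∀ n, 0 ≤ B n := fun n =>
      mul_nonneg (by positivity) (mul_nonneg (Real.rpow_nonneg (h1pos n).le _) (norm_nonneg _))
    have halnn : ∀ n, 0 ≤ al n := fun n =>
      mul_nonneg (Real.rpow_nonneg (h1pos n).le _) (norm_nonneg _)
    have hal2nn : ∀ n, 0 ≤ al2 n := fun n =>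
      mul_nonneg (Real.rpow_nonneg (h1pos n).le _) (norm_nonneg _)
    -- square summability
    have hA2 : Summable (fun n => A n ^ 2) := by
      apply Summable.of_nonneg_of_le (fun n => sq_nonneg _) (fun n => ?_) hw2
      rw [hAdef]
      simp only
      rw [mul_pow, Acc.rpow_sq (h1pos n), show 2*((s-1)/2) = s-1 by ring]
      exact mul_le_mul_of_nonneg_right
        (Real.rpow_le_rpow_of_exponent_le (h1le n) (by linarith)) (sq_nonneg _)
    have hTA : ∑' n : ℤ, A n ^ 2 = HsNorm (s-1) w ^ 2 := by
      have h1 : ∀ n : ℤ, A n ^ 2 = ((1:ℝ)+(n:ℝ)^2) ^ (s-1) * ‖fc w n‖ ^ 2 := by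
        intro n
        rw [hAdef]
        simp only
        rw [mul_pow, Acc.rpow_sq (h1pos n), show 2*((s-1)/2) = s-1 by ring]
      rw [tsum_congr h1]
      unfold HsNorm
      rw [Real.sq_sqrt (tsum_nonneg (fun n : ℤ =>
        mul_nonneg (Real.rpow_nonneg (h1pos n).le _) (sq_nonneg _)))]
    have hB2 : Summable (fun n => B n ^ 2) := by
      apply (hw2.mul_left ((2*Real.pi)^2)).congr
      intro n
      rw [hBdef]
      simp only
      have hh : (((1:ℝ)+(n:ℝ)^2) ^ (s/2)) ^ 2 = ((1:ℝ)+(n:ℝ)^2) ^ s := by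
        rw [Acc.rpow_sq (h1pos n), show 2*(s/2) = s by ring]
      rw [mul_pow (2*Real.pi) (((1:ℝ)+(n:ℝ)^2) ^ (s/2) * ‖fc w n‖) 2,
        mul_pow (((1:ℝ)+(n:ℝ)^2) ^ (s/2)) (‖fc w n‖) 2, hh]
    -- ℓ¹ facts via Cauchy-Schwarz
    have hx2 : Summable (fun n : ℤ => (((1:ℝ)+(n:ℝ)^2) ^ (s/2) * ‖fc u n‖) ^ 2) := by
      apply hu2.congr
      intro n
      rw [mul_pow, Acc.rpow_sq (h1pos n), show 2*(s/2) = s by ring]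
    have hxnn : ∀ n : ℤ, 0 ≤ ((1:ℝ)+(n:ℝ)^2) ^ (s/2) * ‖fc u n‖ := fun n =>
      mul_nonneg (Real.rpow_nonneg (h1pos n).le _) (norm_nonneg _)
    have hXval : Real.sqrt (∑' n : ℤ, (((1:ℝ)+(n:ℝ)^2) ^ (s/2) * ‖fc u n‖) ^ 2)
        = HsNorm s u := by
      unfold HsNorm
      congr 1
      apply tsum_congr
      intro n
      rw [mul_pow, Acc.rpow_sq (h1pos n), show 2*(s/2) = s by ring]
    -- weight sequences
    have hy2 : Summable (fun n : ℤ => (((1:ℝ)+(n:ℝ)^2) ^ (max 1 (s-1) / 2 - s/2)) ^ 2) := by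
      have hlt : 2 * (max 1 (s-1) / 2 - s/2) < -(1/2) := by
        rcases le_total (s-1) 1 with h | h
        · rw [max_eq_left h]; linarith
        · rw [max_eq_right h]; linarith
      apply (Acc.summable_weight hlt).congr
      intro n
      rw [Acc.rpow_sq (h1pos n)]
    have hy2nn : ∀ n : ℤ, (0:ℝ) ≤ ((1:ℝ)+(n:ℝ)^2) ^ (max 1 (s-1) / 2 - s/2) := fun n =>
      Real.rpow_nonneg (h1pos n).le _
    obtain ⟨halsum, halbound⟩ := Acc.tsum_cs hxnn hy2nn hx2 hy2
    have hxyal : ∀ n : ℤ, ((1:ℝ)+(n:ℝ)^2) ^ (s/2) * ‖fc u n‖ *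
        ((1:ℝ)+(n:ℝ)^2) ^ (max 1 (s-1) / 2 - s/2) = al n := by
      intro n
      rw [haldef]
      simp only
      rw [mul_right_comm, ← Real.rpow_add (h1pos n),
        show s/2 + (max 1 (s-1) / 2 - s/2) = max 1 (s-1) / 2 by ring]
    have halsum' : Summable al := halsum.congr hxyal
    have halbound' : ∑' n, al n ≤ HsNorm s u * D := by
      rw [← tsum_congr hxyal, hDval, ← hXval]
      exact halbound
    -- al2 summable
    have hz2 : Summable (fun n : ℤ => (((1:ℝ)+(n:ℝ)^2) ^ ((s-1)/2 - s/2)) ^ 2) := by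
      have hlt : 2 * ((s-1)/2 - s/2) < -(1/2) := by linarith
      apply (Acc.summable_weight hlt).congr
      intro n
      rw [Acc.rpow_sq (h1pos n)]
    have hz2nn : ∀ n : ℤ, (0:ℝ) ≤ ((1:ℝ)+(n:ℝ)^2) ^ ((s-1)/2 - s/2) := fun n =>
      Real.rpow_nonneg (h1pos n).le _
    obtain ⟨hal2sum, -⟩ := Acc.tsum_cs hxnn hz2nn hx2 hz2
    have hxyal2 : ∀ n : ℤ, ((1:ℝ)+(n:ℝ)^2) ^ (s/2) * ‖fc u n‖ *
        ((1:ℝ)+(n:ℝ)^2) ^ ((s-1)/2 - s/2) = al2 n := by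
      intro n
      rw [hal2def]
      simp only
      rw [mul_right_comm, ← Real.rpow_add (h1pos n),
        show s/2 + ((s-1)/2 - s/2) = (s-1)/2 by ring]
    have hal2sum' : Summable al2 := hal2sum.congr hxyal2
    -- the double family
    have hXbound : ∀ m : ℤ, ‖fc u m‖ ≤ HsNorm s u := Acc.fc_bound (by linarith) hu2
    have hbk : ∀ k : ℤ, Summable (fun j : ℤ =>
        Acc.cDx w j * fc u (k-j) * (starRingEnd ℂ) (fc w k)) := by
      intro k
      apply Summable.of_norm_bounded (g := fun j => ‖Acc.cDx w j‖ * (HsNorm s u * ‖fc w k‖))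
        (hc.mul_right _)
      intro j
      rw [norm_mul, norm_mul, starRingEnd_apply, norm_star, mul_assoc]
      exact mul_le_mul_of_nonneg_left
        (mul_le_mul_of_nonneg_right (hXbound _) (norm_nonneg _)) (norm_nonneg _)
    set f : ℤ × ℤ → ℝ := fun p => ((1:ℝ)+(p.1:ℝ)^2) ^ (s-1) *
      (Acc.cDx w p.2 * fc u (p.1-p.2) * (starRingEnd ℂ) (fc w p.1)).re with hfdef
    have hterm : ∀ k : ℤ, ((1:ℝ)+(k:ℝ)^2) ^ (s-1) *
        (fc (fun x => u x * Dx w x) k * (starRingEnd ℂ) (fc w k)).re = ∑' j : ℤ, f (k, j) := by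
      intro k
      rw [Acc.fc_dx_prod u w huI hc k, ← tsum_mul_right, Complex.re_tsum (hbk k),
        ← tsum_mul_left]
    have hrow : ∀ k : ℤ, Summable (fun j => f (k, j)) := by
      intro k
      have h := ((Complex.hasSum_re (hbk k).hasSum).summable).mul_left
        (((1:ℝ)+(k:ℝ)^2) ^ (s-1))
      exact h.congr (fun j => rfl)
    -- crude summability of f
    have hcrude : ∀ p : ℤ × ℤ, ‖f p‖ ≤
        2 ^ ((s-1)/2) * (al2 (p.1 - p.2) * (B p.2 * A p.1)) :=
      fun p => Acc.crude_bound (by linarith) u w p.1 p.2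
    have hbil2 := Acc.bilinear hal2nn hAnn hBnn hal2sum' hA2 hB2
    have hfsum : Summable f :=
      Summable.of_norm_bounded (hbil2.1.mul_left (2 ^ ((s-1)/2))) hcrude
    have hS : HsInner (s-1) (fun x => u x * Dx w x) w = ∑' p : ℤ × ℤ, f p := by
      unfold HsInner
      rw [tsum_congr hterm]
      exact (Summable.tsum_prod' hfsum hrow).symm
    -- symmetrization
    have hswap : Summable (fun p : ℤ × ℤ => f (p.2, p.1)) := by
      have h := ((Equiv.prodComm ℤ ℤ).summable_iff (f := f)).2 hfsum
      exact h.congr (fun p => rfl)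
    have htsum_swap : ∑' p : ℤ × ℤ, f (p.2, p.1) = ∑' p, f p := by
      rw [← (Equiv.prodComm ℤ ℤ).tsum_eq f]
      exact tsum_congr (fun p => rfl)
    have h2S : 2 * ∑' p, f p = ∑' p : ℤ × ℤ, (f p + f (p.2, p.1)) := by
      rw [Summable.tsum_add hfsum hswap, htsum_swap]
      ring
    have hpoint : ∀ p : ℤ × ℤ, |f p + f (p.2, p.1)| ≤
        2 * Real.pi * (2 * max (s-1) (s-1)⁻¹ * 2 ^ (s-1) + 1) *
          (al (p.1 - p.2) * (A p.2 * A p.1)) :=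
      fun p => Acc.point_bound hθ u w p.1 p.2
    have hbil := Acc.bilinear halnn hAnn hAnn halsum' hA2 hA2
    have hsum_fs : Summable (fun p : ℤ × ℤ => f p + f (p.2, p.1)) := hfsum.add hswap
    have habs1 : |∑' p : ℤ × ℤ, (f p + f (p.2, p.1))| ≤
        ∑' p : ℤ × ℤ, |f p + f (p.2, p.1)| := by
      have h := norm_tsum_le_tsum_norm (f := fun p : ℤ × ℤ => f p + f (p.2, p.1))
        (hsum_fs.abs.congr (fun p => (Real.norm_eq_abs _).symm))
      rw [Real.norm_eq_abs] at h
      exact h.trans (le_of_eq (tsum_congr (fun p => Real.norm_eq_abs _)))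
    have habs2 : ∑' p : ℤ × ℤ, |f p + f (p.2, p.1)| ≤
        2 * Real.pi * (2 * max (s-1) (s-1)⁻¹ * 2 ^ (s-1) + 1) *
          ∑' p : ℤ × ℤ, (al (p.1 - p.2) * (A p.2 * A p.1)) := by
      rw [← tsum_mul_left]
      exact Summable.tsum_le_tsum hpoint hsum_fs.abs (hbil.1.mul_left _)
    have habs3 : ∑' p : ℤ × ℤ, (al (p.1 - p.2) * (A p.2 * A p.1)) ≤
        (∑' m, al m) * ∑' k, A k ^ 2 := by
      have h := hbil.2
      have heq : (((∑' k, A k ^ 2) + ∑' k, A k ^ 2) / 2) = ∑' k, A k ^ 2 := by ring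
      rw [heq] at h
      exact h
    -- final assembly
    have hfinal : |HsInner (s-1) (fun x => u x * Dx w x) w| ≤
        Real.pi * Cker * D * HsNorm s u * HsNorm (s-1) w ^ 2 := by
      rw [hS]
      have h1 : |∑' p : ℤ × ℤ, f p| =
          |∑' p : ℤ × ℤ, (f p + f (p.2, p.1))| / 2 := by
        rw [← h2S, abs_mul]
        norm_num
      rw [h1]
      rw [div_le_iff₀ (by norm_num : (0:ℝ) < 2)]
      have halnonneg : 0 ≤ ∑' m, al m := tsum_nonneg halnn
      have hA2nonneg : 0 ≤ ∑' k, A k ^ 2 := tsum_nonneg (fun k => sq_nonneg _)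
      have hchain : |∑' p : ℤ × ℤ, (f p + f (p.2, p.1))| ≤
          2 * Real.pi * (2 * max (s-1) (s-1)⁻¹ * 2 ^ (s-1) + 1) *
            ((∑' m, al m) * ∑' k, A k ^ 2) := by
        apply (habs1.trans habs2).trans
        apply mul_le_mul_of_nonneg_left habs3
        have hE0' : (0:ℝ) < max (s-1) (s-1)⁻¹ := lt_of_lt_of_le hθ0 (le_max_left _ _)
        have h2θ0' : (0:ℝ) < 2 ^ (s-1) := Real.rpow_pos_of_pos two_pos _
        have hpos : (0:ℝ) < 2 * max (s-1) (s-1)⁻¹ * 2 ^ (s-1) + 1 := by nlinarith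
        exact mul_nonneg (by positivity) hpos.le
      apply hchain.trans
      rw [hTA, hCkerval, hDval]
      have hαD : ∑' m, al m ≤ HsNorm s u * Real.sqrt (∑' m : ℤ,
          (((1:ℝ) + (m:ℝ) ^ 2) ^ (max 1 (s-1) / 2 - s/2)) ^ 2) := by
        rw [← hDval]
        exact halbound'
      have hE0' : (0:ℝ) < max (s-1) (s-1)⁻¹ := lt_of_lt_of_le hθ0 (le_max_left _ _)
      have h2θ0' : (0:ℝ) < 2 ^ (s-1) := Real.rpow_pos_of_pos two_pos _
      have hCk0' : (0:ℝ) < 2 * max (s-1) (s-1)⁻¹ * 2 ^ (s-1) + 1 := by nlinarith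
      have hW2 : 0 ≤ HsNorm (s-1) w ^ 2 := sq_nonneg _
      rw [hDval] at hD0
      calc 2 * Real.pi * (2 * max (s-1) (s-1)⁻¹ * 2 ^ (s-1) + 1) *
            ((∑' m, al m) * HsNorm (s-1) w ^ 2)
          ≤ 2 * Real.pi * (2 * max (s-1) (s-1)⁻¹ * 2 ^ (s-1) + 1) *
            ((HsNorm s u * Real.sqrt (∑' m : ℤ,
              (((1:ℝ) + (m:ℝ) ^ 2) ^ (max 1 (s-1) / 2 - s/2)) ^ 2)) * HsNorm (s-1) w ^ 2) := by
            apply mul_le_mul_of_nonneg_left _ (by nlinarith [hπ])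
            exact mul_le_mul_of_nonneg_right hαD hW2
        _ = Real.pi * (2 * max (s-1) (s-1)⁻¹ * 2 ^ (s-1) + 1) *
            Real.sqrt (∑' m : ℤ, (((1:ℝ) + (m:ℝ) ^ 2) ^ (max 1 (s-1) / 2 - s/2)) ^ 2) *
            HsNorm s u * HsNorm (s-1) w ^ 2 * 2 := by ring
    exact hfinal.trans hRHSfact
  · -- degenerate case : Dx w ≡ 0
    have hfn : (fun x => u x * Dx w x) = (fun _ : ℝ => (0:ℝ)) := by
      funext x
      rw [Acc.dx_zero w hc x, mul_zero]
    have hfc0 : ∀ k : ℤ, fc (fun _ : ℝ => (0:ℝ)) k = 0 := by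
      intro k
      unfold fc
      simp
    have hinner0 : HsInner (s-1) (fun x => u x * Dx w x) w = 0 := by
      rw [hfn]
      unfold HsInner
      have hterm0 : ∀ k : ℤ, ((1:ℝ) + (k:ℝ) ^ 2) ^ (s-1) *
          (fc (fun _ : ℝ => (0:ℝ)) k * (starRingEnd ℂ) (fc w k)).re = 0 := by
        intro k
        rw [hfc0 k, zero_mul, Complex.zero_re, mul_zero]
      rw [tsum_congr hterm0]
      exact tsum_zero
    rw [hinner0, abs_zero]
    have := mul_nonneg (mul_nonneg (by linarith : (0:ℝ) ≤ Real.pi * Cker * D + 1) hXnn)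
      (sq_nonneg (HsNorm (s-1) w))
    nlinarith
end

section
/- Conservation of momentum: Let J ⊆ ℝ be an open interval and let u : ℝ × J → ℝ be 1-periodic in x with u, u_x, u_t, u_{xx}, u_{xt}, u_{xxx}, u_{xxt} continuous on ℝ × J, and suppose u satisfies u_t − u_{txx} = 4uu_x + 2u_x² + 2uu_{xx} − 6u_xu_{xx} − 2uu_{xxx} on ℝ × J. Then the function t ↦ ∫₀¹ ( u(x,t) − u_{xx}(x,t) ) dx is constant on J. -/
noncomputable section

/-- Partial derivative in the first (spatial) variable. -/
def pdx (f : ℝ → ℝ → ℝ) : ℝ → ℝ → ℝ := fun x t => deriv (fun y => f y t) x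

/-- Partial derivative in the second (time) variable. -/
def pdt (f : ℝ → ℝ → ℝ) : ℝ → ℝ → ℝ := fun x t => deriv (fun τ => f x τ) t

end

/-!
Both `∫₀¹ u_xx dx` and `∫₀¹ u_t dx` vanish, since along solutions each integrand is the
`x`-derivative of a 1-periodic function: `u_xx = ∂ₓ u_x`, and by the equation
`u_t = ∂ₓ (u_xt + 2u² + 2uu_x - 2u_x² - 2uu_xx)`. Hence the momentum reduces to `∫₀¹ u dx`, and
`∫₀¹ u(x, b) - u(x, a) dx = ∫ₐᵇ ∫₀¹ u_t dx dt = 0` by Fubini.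
-/

open Set MeasureTheory Function

theorem Function.Periodic.deriv {𝕜 F : Type*} [NontriviallyNormedField 𝕜] [NormedAddCommGroup F]
    [NormedSpace 𝕜 F] {f : 𝕜 → F} {c : 𝕜} (hf : f.Periodic c) : (deriv f).Periodic c := fun x => by
  rw [← deriv_comp_add_const, funext hf]

theorem ContinuousOn.continuous_comp_prodMk_left {α β γ : Type*} [TopologicalSpace α]
    [TopologicalSpace β] [TopologicalSpace γ] {f : α × β → γ} {s : Set β}
    (hf : ContinuousOn f (univ ×ˢ s)) {b : β} (hb : b ∈ s) : Continuous fun a => f (a, b) :=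
  hf.comp_continuous (Continuous.prodMk_left b) fun _ => ⟨trivial, hb⟩

section Calculus

variable {E : Type*} [NormedAddCommGroup E] [NormedSpace ℝ E]

theorem intervalIntegral.integral_eq_zero_of_hasDerivAt_of_periodic [CompleteSpace E]
    {F f : ℝ → E} {a c : ℝ}
    (hF : ∀ x, HasDerivAt F (f x) x) (hper : F.Periodic c)
    (hf : IntervalIntegrable f volume a (a + c)) : ∫ x in a..a + c, f x = 0 := by
  rw [integral_eq_sub_of_hasDerivAt (fun x _ => hF x) hf, hper, sub_self]

theorem intervalIntegral.integral_integral_swap_of_continuousOn {f : ℝ → ℝ → E} {p q a b : ℝ}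
    (hpq : p ≤ q) (hab : a ≤ b) (hf : ContinuousOn (uncurry f) (Icc p q ×ˢ Icc a b)) :
    ∫ x in p..q, ∫ τ in a..b, f x τ = ∫ τ in a..b, ∫ x in p..q, f x τ := by
  simp only [intervalIntegral.integral_of_le hpq, intervalIntegral.integral_of_le hab]
  apply integral_integral_swap
  rw [Measure.prod_restrict]
  exact (hf.integrableOn_compact (isCompact_Icc.prod isCompact_Icc)).mono_set
    (prod_mono Ioc_subset_Icc_self Ioc_subset_Icc_self)

end Calculus

theorem integral_slice_eq_of_integral_pdt_eq_zero {J : Set ℝ} (hJ : J.OrdConnected)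
    {u : ℝ → ℝ → ℝ} {p q : ℝ} (hpq : p ≤ q)
    (hd : ∀ t ∈ J, ∀ x, DifferentiableAt ℝ (u x) t)
    (hu : ContinuousOn (uncurry u) (univ ×ˢ J))
    (hut : ContinuousOn (uncurry (pdt u)) (univ ×ˢ J))
    (hzero : ∀ t ∈ J, ∫ x in p..q, pdt u x t = 0) :
    ∀ a ∈ J, ∀ b ∈ J, ∫ x in p..q, u x a = ∫ x in p..q, u x b := by
  suffices key : ∀ a ∈ J, ∀ b ∈ J, a ≤ b → ∫ x in p..q, u x a = ∫ x in p..q, u x b by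
    intro a ha b hb
    rcases le_total a b with hab | hba
    exacts [key a ha b hb hab, (key b hb a ha hba).symm]
  intro a ha b hb hab
  have hIcc : uIcc a b ⊆ J := hJ.uIcc_subset ha hb
  have hut_rect : ContinuousOn (uncurry (pdt u)) (Icc p q ×ˢ Icc a b) :=
    hut.mono (prod_mono (subset_univ _) (uIcc_of_le hab ▸ hIcc))
  have hftc : ∀ x, u x b - u x a = ∫ τ in a..b, pdt u x τ := fun x =>
    (intervalIntegral.integral_eq_sub_of_hasDerivAt (fun τ hτ => (hd τ (hIcc hτ) x).hasDerivAt)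
      (hut.comp (Continuous.prodMk_right x).continuousOn
        fun τ hτ => ⟨trivial, hIcc hτ⟩).intervalIntegrable).symm
  have hdiff : ∫ x in p..q, (u x b - u x a) = 0 := by
    calc ∫ x in p..q, (u x b - u x a)
        = ∫ x in p..q, ∫ τ in a..b, pdt u x τ := by simp only [hftc]
      _ = ∫ τ in a..b, ∫ x in p..q, pdt u x τ :=
        intervalIntegral.integral_integral_swap_of_continuousOn hpq hab hut_rect
      _ = ∫ _ in a..b, (0 : ℝ) := intervalIntegral.integral_congr fun τ hτ => hzero τ (hIcc hτ)
      _ = 0 := intervalIntegral.integral_zero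
  have hia : IntervalIntegrable (fun x => u x a) volume p q :=
    (hu.continuous_comp_prodMk_left ha).intervalIntegrable _ _
  have hib : IntervalIntegrable (fun x => u x b) volume p q :=
    (hu.continuous_comp_prodMk_left hb).intervalIntegrable _ _
  rw [intervalIntegral.integral_sub hib hia, sub_eq_zero] at hdiff
  exact hdiff.symm

theorem periodic_pdt_of_isOpen {J : Set ℝ} (hJ : IsOpen J) {u : ℝ → ℝ → ℝ} {c t : ℝ}
    (hper : ∀ τ ∈ J, (fun y => u y τ).Periodic c) (ht : t ∈ J) :
    (fun y => pdt u y t).Periodic c := fun x => by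
  have hslice : (fun τ => u (x + c) τ) =ᶠ[nhds t] fun τ => u x τ := by
    filter_upwards [hJ.mem_nhds ht] with τ hτ using hper τ hτ x
  exact hslice.deriv_eq

section Novikov

variable {u : ℝ → ℝ → ℝ} {x t : ℝ}

noncomputable def momentumFlux (u : ℝ → ℝ → ℝ) (x t : ℝ) : ℝ :=
  pdx (pdt u) x t + 2 * u x t ^ 2 + 2 * (u x t * pdx u x t) - 2 * pdx u x t ^ 2
    - 2 * (u x t * pdx (pdx u) x t)

theorem hasDerivAt_momentumFlux
    (hu : DifferentiableAt ℝ (fun y => u y t) x)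
    (hux : DifferentiableAt ℝ (fun y => pdx u y t) x)
    (huxx : DifferentiableAt ℝ (fun y => pdx (pdx u) y t) x)
    (hutx : DifferentiableAt ℝ (fun y => pdx (pdt u) y t) x)
    (heq : pdt u x t - pdx (pdx (pdt u)) x t =
        4 * u x t * pdx u x t + 2 * (pdx u x t) ^ 2 + 2 * u x t * pdx (pdx u) x t
          - 6 * pdx u x t * pdx (pdx u) x t - 2 * u x t * pdx (pdx (pdx u)) x t) :
    HasDerivAt (fun y => momentumFlux u y t) (pdt u x t) x := by
  have H : HasDerivAt (fun y => momentumFlux u y t) _ x :=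
    (((hutx.hasDerivAt.fun_add ((hu.hasDerivAt.fun_pow 2).const_mul 2)).fun_add
      ((hu.hasDerivAt.fun_mul hux.hasDerivAt).const_mul 2)).fun_sub
      ((hux.hasDerivAt.fun_pow 2).const_mul 2)).fun_sub
      ((hu.hasDerivAt.fun_mul huxx.hasDerivAt).const_mul 2)
  refine H.congr_deriv ?_
  simp only [pdx, Nat.cast_ofNat] at heq ⊢
  linear_combination -heq

theorem momentumFlux_periodic {c : ℝ} (hu : (fun y => u y t).Periodic c)
    (hut : (fun y => pdt u y t).Periodic c) : (fun y => momentumFlux u y t).Periodic c := by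
  have hux : (fun y => pdx u y t).Periodic c := hu.deriv
  have huxx : (fun y => pdx (pdx u) y t).Periodic c := hux.deriv
  have hutx : (fun y => pdx (pdt u) y t).Periodic c := hut.deriv
  intro y
  simp only [momentumFlux, hu y, hux y, huxx y, hutx y]

end Novikov

theorem conservation_of_momentum_general
    (J : Set ℝ) (hJo : IsOpen J) (hJc : J.OrdConnected)
    (u : ℝ → ℝ → ℝ)
    (hper : ∀ t ∈ J, ∀ x : ℝ, u (x + 1) t = u x t)
    -- existence of the partial derivatives
    (hd1 : ∀ t ∈ J, ∀ x : ℝ, DifferentiableAt ℝ (fun y => u y t) x)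
    (hd2 : ∀ t ∈ J, ∀ x : ℝ, DifferentiableAt ℝ (fun y => pdx u y t) x)
    (hd3 : ∀ t ∈ J, ∀ x : ℝ, DifferentiableAt ℝ (fun y => pdx (pdx u) y t) x)
    (hd4 : ∀ t ∈ J, ∀ x : ℝ, DifferentiableAt ℝ (fun τ => u x τ) t)
    (hd6 : ∀ t ∈ J, ∀ x : ℝ, DifferentiableAt ℝ (fun y => pdx (pdt u) y t) x)
    -- continuity of u, u_x, u_t, u_xx, u_xt, u_xxx, u_xxt on ℝ × J
    (hc0 : ContinuousOn (fun p : ℝ × ℝ => u p.1 p.2) (Set.univ ×ˢ J))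
    (hc2 : ContinuousOn (fun p : ℝ × ℝ => pdt u p.1 p.2) (Set.univ ×ˢ J))
    (hc3 : ContinuousOn (fun p : ℝ × ℝ => pdx (pdx u) p.1 p.2) (Set.univ ×ˢ J))
    -- the equation
    (heq : ∀ t ∈ J, ∀ x : ℝ,
      pdt u x t - pdx (pdx (pdt u)) x t =
        4 * u x t * pdx u x t + 2 * (pdx u x t) ^ 2 + 2 * u x t * pdx (pdx u) x t
          - 6 * pdx u x t * pdx (pdx u) x t - 2 * u x t * pdx (pdx (pdx u)) x t) :
    ∀ t₁ ∈ J, ∀ t₂ ∈ J,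
      (∫ x in (0:ℝ)..1, (u x t₁ - pdx (pdx u) x t₁)) =
      (∫ x in (0:ℝ)..1, (u x t₂ - pdx (pdx u) x t₂)) := by
  have hut_zero : ∀ t ∈ J, ∫ x in (0:ℝ)..1, pdt u x t = 0 := by
    intro t ht
    simpa only [zero_add] using intervalIntegral.integral_eq_zero_of_hasDerivAt_of_periodic (a := 0)
      (fun x => hasDerivAt_momentumFlux (hd1 t ht x) (hd2 t ht x) (hd3 t ht x) (hd6 t ht x)
        (heq t ht x))
      (momentumFlux_periodic (hper t ht) (periodic_pdt_of_isOpen hJo hper ht))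
      ((hc2.continuous_comp_prodMk_left ht).intervalIntegrable _ _)
  have hmomentum :
      ∀ t ∈ J, ∫ x in (0:ℝ)..1, (u x t - pdx (pdx u) x t) = ∫ x in (0:ℝ)..1, u x t := by
    intro t ht
    have huxx_zero : ∫ x in (0:ℝ)..0 + 1, pdx (pdx u) x t = 0 :=
      intervalIntegral.integral_eq_zero_of_hasDerivAt_of_periodic
        (fun x => (hd2 t ht x).hasDerivAt) (Periodic.deriv (hper t ht))
        ((hc3.continuous_comp_prodMk_left ht).intervalIntegrable _ _)
    rw [zero_add] at huxx_zero
    rw [intervalIntegral.integral_sub ((hc0.continuous_comp_prodMk_left ht).intervalIntegrable _ _)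
      ((hc3.continuous_comp_prodMk_left ht).intervalIntegrable _ _), huxx_zero, sub_zero]
  intro t₁ ht₁ t₂ ht₂
  rw [hmomentum t₁ ht₁, hmomentum t₂ ht₂]
  exact integral_slice_eq_of_integral_pdt_eq_zero hJc zero_le_one hd4 hc0 hc2 hut_zero t₁ ht₁ t₂ ht₂

/-- **Conservation of momentum.**
Let `J ⊆ ℝ` be an open interval and let `u : ℝ × J → ℝ` be 1-periodic in `x`, of class
`C^{3,1}` (i.e. `u, u_x, u_t, u_xx, u_xt, u_xxx, u_xxt` continuous), solving
`u_t - u_{txx} = 4uu_x + 2u_x² + 2uu_{xx} - 6u_xu_{xx} - 2uu_{xxx}` on `ℝ × J`.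
Then `t ↦ ∫₀¹ (u - u_{xx}) dx` is constant on `J`. -/
theorem conservation_of_momentum
    (J : Set ℝ) (hJo : IsOpen J) (hJc : J.OrdConnected)
    (u : ℝ → ℝ → ℝ)
    (hper : ∀ t ∈ J, ∀ x : ℝ, u (x + 1) t = u x t)
    -- existence of the partial derivatives
    (hd1 : ∀ t ∈ J, ∀ x : ℝ, DifferentiableAt ℝ (fun y => u y t) x)
    (hd2 : ∀ t ∈ J, ∀ x : ℝ, DifferentiableAt ℝ (fun y => pdx u y t) x)
    (hd3 : ∀ t ∈ J, ∀ x : ℝ, DifferentiableAt ℝ (fun y => pdx (pdx u) y t) x)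
    (hd4 : ∀ t ∈ J, ∀ x : ℝ, DifferentiableAt ℝ (fun τ => u x τ) t)
    (hd5 : ∀ t ∈ J, ∀ x : ℝ, DifferentiableAt ℝ (fun y => pdt u y t) x)
    (hd6 : ∀ t ∈ J, ∀ x : ℝ, DifferentiableAt ℝ (fun y => pdx (pdt u) y t) x)
    -- continuity of u, u_x, u_t, u_xx, u_xt, u_xxx, u_xxt on ℝ × J
    (hc0 : ContinuousOn (fun p : ℝ × ℝ => u p.1 p.2) (Set.univ ×ˢ J))
    (hc1 : ContinuousOn (fun p : ℝ × ℝ => pdx u p.1 p.2) (Set.univ ×ˢ J))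
    (hc2 : ContinuousOn (fun p : ℝ × ℝ => pdt u p.1 p.2) (Set.univ ×ˢ J))
    (hc3 : ContinuousOn (fun p : ℝ × ℝ => pdx (pdx u) p.1 p.2) (Set.univ ×ˢ J))
    (hc4 : ContinuousOn (fun p : ℝ × ℝ => pdx (pdt u) p.1 p.2) (Set.univ ×ˢ J))
    (hc5 : ContinuousOn (fun p : ℝ × ℝ => pdx (pdx (pdx u)) p.1 p.2) (Set.univ ×ˢ J))
    (hc6 : ContinuousOn (fun p : ℝ × ℝ => pdx (pdx (pdt u)) p.1 p.2) (Set.univ ×ˢ J))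
    -- the equation
    (heq : ∀ t ∈ J, ∀ x : ℝ,
      pdt u x t - pdx (pdx (pdt u)) x t =
        4 * u x t * pdx u x t + 2 * (pdx u x t) ^ 2 + 2 * u x t * pdx (pdx u) x t
          - 6 * pdx u x t * pdx (pdx u) x t - 2 * u x t * pdx (pdx (pdx u)) x t) :
    ∀ t₁ ∈ J, ∀ t₂ ∈ J,
      (∫ x in (0:ℝ)..1, (u x t₁ - pdx (pdx u) x t₁)) =
      (∫ x in (0:ℝ)..1, (u x t₂ - pdx (pdx u) x t₂)) :=
  conservation_of_momentum_general J hJo hJc u hper hd1 hd2 hd3 hd4 hd6 hc0 hc2 hc3 heq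
end

section
/- Periodic non-generic solutions are constant: Let m₁ ∈ {−2, 1} and let w : ℝ → ℝ be a twice continuously differentiable 1-periodic function. Then w satisfies m₁( w(x) w''(x) + w'(x)² ) − 2 w(x) w'(x) = 0 for all x ∈ ℝ if and only if w is constant. -/
/-- **Periodic non-generic solutions are constant.**
Let `m₁ ∈ {-2,1}` and let `w : ℝ → ℝ` be a `C²` 1-periodic function. Then
`m₁(ww'' + w'²) - 2ww' = 0` on `ℝ` if and only if `w` is constant. -/
theorem periodic_nongeneric_solutions_constant
    (m₁ : ℝ) (hm₁ : m₁ = -2 ∨ m₁ = 1)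
    (w : ℝ → ℝ) (hw : ContDiff ℝ 2 w) (hper : Function.Periodic w 1) :
    (∀ x : ℝ, m₁ * (w x * deriv (deriv w) x + (deriv w x) ^ 2)
        - 2 * w x * deriv w x = 0) ↔ ∃ c : ℝ, ∀ x : ℝ, w x = c := by
  have hm0 : m₁ ≠ 0 := by rcases hm₁ with h | h <;> simp [h]
  have hwd : Differentiable ℝ w := hw.differentiable (by norm_num)
  have hw2 : ContDiff ℝ 1 (deriv w) := by
    have := (contDiff_succ_iff_deriv (n := 1)).mp (by exact_mod_cast hw)
    exact this.2.2
  have hwd' : Differentiable ℝ (deriv w) := hw2.differentiable (by norm_num)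
  constructor
  · intro h
    set v : ℝ → ℝ := fun x => w x * deriv w x with hv
    have hvd : Differentiable ℝ v := hwd.mul hwd'
    have hderiv : ∀ x, deriv v x = deriv w x * deriv w x + w x * deriv (deriv w) x := by
      intro x
      exact deriv_mul (hwd x) (hwd' x)
    -- v satisfies m₁ * deriv v = 2 v
    have hode : ∀ x, m₁ * deriv v x = 2 * v x := by
      intro x
      have := h x
      rw [hderiv x, hv]
      ring_nf
      ring_nf at this
      linarith
    -- v is periodic
    have hdper : Function.Periodic (deriv w) 1 := by
      intro x
      have : (fun y => w (y + 1)) = w := funext fun y => hper y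
      calc deriv w (x + 1) = deriv (fun y => w (y + 1)) x := (deriv_comp_add_const _ _ _).symm
        _ = deriv w x := by rw [this]
    have hvper : Function.Periodic v 1 := fun x => by simp [hv, hper x, hdper x]
    -- zero at local extrema
    have key : ∀ x, v x = 0 → True := fun _ _ => trivial
    have hvc : Continuous v := hvd.continuous
    obtain ⟨a, -, ha⟩ := isCompact_Icc.exists_isMaxOn (Set.nonempty_Icc.2 (by norm_num : (0:ℝ) ≤ 1)) hvc.continuousOn
    obtain ⟨b, -, hb⟩ := isCompact_Icc.exists_isMinOn (Set.nonempty_Icc.2 (by norm_num : (0:ℝ) ≤ 1)) hvc.continuousOn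
    have hmax : ∀ x, v x ≤ v a := by
      intro x
      obtain ⟨y, hy, hxy⟩ := hvper.exists_mem_Ico₀ one_pos x
      rw [hxy]
      exact ha (Set.mem_Icc.2 ⟨hy.1, hy.2.le⟩)
    have hmin : ∀ x, v b ≤ v x := by
      intro x
      obtain ⟨y, hy, hxy⟩ := hvper.exists_mem_Ico₀ one_pos x
      rw [hxy]
      exact hb (Set.mem_Icc.2 ⟨hy.1, hy.2.le⟩)
    have hda : deriv v a = 0 := by
      have : IsLocalMax v a := Filter.Eventually.of_forall hmax
      exact this.deriv_eq_zero
    have hdb : deriv v b = 0 := by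
      have : IsLocalMin v b := Filter.Eventually.of_forall hmin
      exact this.deriv_eq_zero
    have hva : v a = 0 := by have := hode a; rw [hda] at this; linarith
    have hvb : v b = 0 := by have := hode b; rw [hdb] at this; linarith
    have hv0 : ∀ x, v x = 0 := fun x => le_antisymm (hva ▸ hmax x) (hvb ▸ hmin x)
    -- so (w²)' = 0 everywhere
    have hsq : ∀ x, deriv (fun y => w y ^ 2) x = 0 := by
      intro x
      have : deriv (fun y => w y ^ 2) x = 2 * w x * deriv w x := by
        rw [show (fun y => w y ^ 2) = fun y => w y * w y from funext fun y => sq (w y)]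
        rw [deriv_fun_mul (hwd x) (hwd x)]; ring
      rw [this]
      have := hv0 x
      simp only [hv] at this
      linarith [hv0 x]
    have hsqd : Differentiable ℝ (fun y => w y ^ 2) := hwd.pow 2
    have hconst : ∀ x, w x ^ 2 = w 0 ^ 2 := fun x =>
      is_const_of_deriv_eq_zero hsqd hsq x 0
    refine ⟨w 0, fun x => ?_⟩
    have hx := hconst x
    have hcases : w x = w 0 ∨ w x = -w 0 := sq_eq_sq_iff_eq_or_eq_neg.mp hx
    rcases hcases with h1 | h1
    · exact h1
    · by_cases h0 : w 0 = 0
      · rw [h1, h0, neg_zero]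
      · -- w x = -w 0 with w 0 ≠ 0: IVT gives a zero, contradicting w² const > 0
        exfalso
        have hI : (0:ℝ) ∈ Set.uIcc (w x) (w 0) := by
          rcases lt_or_gt_of_ne h0 with hlt | hgt
          · exact Set.mem_uIcc.2 (Or.inr ⟨hlt.le, by rw [h1]; linarith⟩)
          · exact Set.mem_uIcc.2 (Or.inl ⟨by rw [h1]; linarith, hgt.le⟩)
        obtain ⟨z, _, hz⟩ := intermediate_value_uIcc (f := w) (a := x) (b := 0)
          (hwd.continuous.continuousOn) hI
        have := hconst z
        rw [hz] at this
        simp at this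
        exact h0 (pow_eq_zero_iff (by norm_num) |>.mp this.symm)
  · rintro ⟨c, hc⟩ x
    have : w = fun _ => c := funext hc
    subst this
    simp
end

section
/- Explicit solution of the Gauss–Codazzi system in the case μ = 0: Let β, γ ∈ ℝ, ε ∈ {−1, 1}, and let I ⊆ ℝ be an open interval on which γ e^{2z} − β² e^{4z} − 1 > 0. Define on I the functions φ₁(z) = ε √( γ e^{2z} − β² e^{4z} − 1 ), φ₂(z) = β e^{2z}, and φ₃(z) = φ₁(z) − φ₁'(z). Then φ₁ is differentiable on I and the following identities hold on I: (i) φ₁' − φ₁ + φ₃ = 0 (Codazzi–Mainardi with μ = 0); (ii) φ₂' − 2φ₂ = 0 (Codazzi–Mainardi with μ = 0); (iii) φ₁ φ₃ − φ₂² = −1 (Gauss equation). Moreover φ₁ satisfies the Abel equation φ₁ φ₁' = φ₁² − β² e^{4z} + 1 on I. -/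
/-- **Explicit solution of the Gauss–Codazzi system, case `μ = 0`.**
Let `β, γ ∈ ℝ`, `ε ∈ {-1,1}`, and let `I ⊆ ℝ` be an open interval on which
`γe^{2z} - β²e^{4z} - 1 > 0`.  With `φ₁(z) = ε√(γe^{2z} - β²e^{4z} - 1)`,
`φ₂(z) = βe^{2z}` and `φ₃ = φ₁ - φ₁'`, the function `φ₁` is differentiable on `I` and
on `I` one has the Codazzi–Mainardi equations `φ₁' - φ₁ + φ₃ = 0`, `φ₂' - 2φ₂ = 0`,
the Gauss equation `φ₁φ₃ - φ₂² = -1`, and the Abel equation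
`φ₁φ₁' = φ₁² - β²e^{4z} + 1`. -/
theorem gauss_codazzi_mu_zero
    (β γ ε : ℝ) (hε : ε = -1 ∨ ε = 1)
    (I : Set ℝ) (hIo : IsOpen I) (hIc : I.OrdConnected)
    (hpos : ∀ z ∈ I, 0 < γ * Real.exp (2 * z) - β ^ 2 * Real.exp (4 * z) - 1)
    (φ₁ φ₂ φ₃ : ℝ → ℝ)
    (h1 : φ₁ = fun z => ε * Real.sqrt (γ * Real.exp (2 * z) - β ^ 2 * Real.exp (4 * z) - 1))
    (h2 : φ₂ = fun z => β * Real.exp (2 * z))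
    (h3 : ∀ z ∈ I, φ₃ z = φ₁ z - deriv φ₁ z) :
    ∀ z ∈ I,
      DifferentiableAt ℝ φ₁ z ∧
      deriv φ₁ z - φ₁ z + φ₃ z = 0 ∧
      deriv φ₂ z - 2 * φ₂ z = 0 ∧
      φ₁ z * φ₃ z - (φ₂ z) ^ 2 = -1 ∧
      φ₁ z * deriv φ₁ z = (φ₁ z) ^ 2 - β ^ 2 * Real.exp (4 * z) + 1 := by
  intro z hz
  have hg : 0 < γ * Real.exp (2 * z) - β ^ 2 * Real.exp (4 * z) - 1 := hpos z hz
  set g : ℝ → ℝ := fun z => γ * Real.exp (2 * z) - β ^ 2 * Real.exp (4 * z) - 1 with hgdef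
  have hgz : g z ≠ 0 := ne_of_gt hg
  have hgd : HasDerivAt g (γ * (Real.exp (2 * z) * 2) - β ^ 2 * (Real.exp (4 * z) * 4)) z := by
    have hd1 : HasDerivAt (fun z : ℝ => Real.exp (2 * z)) (Real.exp (2 * z) * 2) z := by
      exact (Real.hasDerivAt_exp (2 * z)).comp z (by simpa using (hasDerivAt_id z).const_mul 2)
    have hd2 : HasDerivAt (fun z : ℝ => Real.exp (4 * z)) (Real.exp (4 * z) * 4) z := by
      exact (Real.hasDerivAt_exp (4 * z)).comp z (by simpa using (hasDerivAt_id z).const_mul 4)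
    rw [hgdef]
    exact ((hd1.const_mul γ).sub (hd2.const_mul (β ^ 2))).sub_const 1
  have hsq : HasDerivAt (fun z => Real.sqrt (g z))
      ((γ * (Real.exp (2 * z) * 2) - β ^ 2 * (Real.exp (4 * z) * 4)) / (2 * Real.sqrt (g z))) z :=
    hgd.sqrt hgz
  have hφ : HasDerivAt φ₁
      (ε * ((γ * (Real.exp (2 * z) * 2) - β ^ 2 * (Real.exp (4 * z) * 4)) / (2 * Real.sqrt (g z)))) z := by
    rw [h1]
    exact (by simpa [hgdef] using hsq : HasDerivAt
      (fun z => Real.sqrt (γ * Real.exp (2 * z) - β ^ 2 * Real.exp (4 * z) - 1))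
      ((γ * (Real.exp (2 * z) * 2) - β ^ 2 * (Real.exp (4 * z) * 4)) / (2 * Real.sqrt (g z))) z).const_mul ε
  have hdφ : deriv φ₁ z
      = ε * ((γ * (Real.exp (2 * z) * 2) - β ^ 2 * (Real.exp (4 * z) * 4)) / (2 * Real.sqrt (g z))) :=
    hφ.deriv
  have hε2 : ε ^ 2 = 1 := by rcases hε with h | h <;> simp [h]
  have hsqrt : Real.sqrt (g z) ^ 2 = g z := Real.sq_sqrt hg.le
  have hsqrtpos : 0 < Real.sqrt (g z) := Real.sqrt_pos.mpr hg
  have hSne : Real.sqrt (g z) ≠ 0 := ne_of_gt hsqrtpos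
  have hφ1z : φ₁ z = ε * Real.sqrt (g z) := by rw [h1]
  have hφ1sq : φ₁ z ^ 2 = g z := by
    rw [hφ1z, mul_pow, hε2, one_mul, hsqrt]
  -- Abel equation
  have habel : φ₁ z * deriv φ₁ z = (φ₁ z) ^ 2 - β ^ 2 * Real.exp (4 * z) + 1 := by
    rw [hdφ, hφ1z, mul_pow, hε2, one_mul, hsqrt]
    have key : ε * Real.sqrt (g z) *
        (ε * ((γ * (Real.exp (2 * z) * 2) - β ^ 2 * (Real.exp (4 * z) * 4)) / (2 * Real.sqrt (g z))))
        = ε ^ 2 * ((γ * (Real.exp (2 * z) * 2) - β ^ 2 * (Real.exp (4 * z) * 4)) / 2)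
          * (Real.sqrt (g z) / Real.sqrt (g z)) := by ring
    rw [key, div_self hSne, hε2, hgdef]
    ring
  have hφ2d : deriv φ₂ z = 2 * φ₂ z := by
    have h2d : HasDerivAt φ₂ (β * (Real.exp (2 * z) * 2)) z := by
      rw [h2]
      exact ((Real.hasDerivAt_exp (2 * z)).comp z
        (by simpa using (hasDerivAt_id z).const_mul 2)).const_mul β
    rw [h2d.deriv, h2]; ring
  refine ⟨hφ.differentiableAt, by rw [h3 z hz]; ring, by rw [hφ2d]; ring, ?_, habel⟩
  have hfact : φ₁ z * φ₃ z = φ₁ z ^ 2 - φ₁ z * deriv φ₁ z := by rw [h3 z hz]; ring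
  have hee : Real.exp (2 * z) ^ 2 = Real.exp (4 * z) := by
    rw [sq, ← Real.exp_add]; congr 1; ring
  rw [hfact, habel, h2]
  simp only [mul_pow, hee]
  ring
end
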